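/- arXiv:1607.08419 — 9 statements merged into one kernel-verified Lean document; each statement's English description precedes it below -/
import Mathlib

section
/- Let n and r be integers with 2 < r < n. An invertible linear map g ∈ GL_n(ℂ) satisfies e_r(g·x) = e_r(x) for all x ∈ ℂⁿ if and only if there exist a permutation σ of {1,…,n} and a complex number ω with ω^r = 1 such that g equals ω times the permutation matrix of σ. In particular, the stabilizer of e_r in GL_n(ℂ) is isomorphic to the semidirect product of the symmetric group S_n with the group of r-th roots of unity. -/
/-!
Call `v` Hessian-isotropic for `e_r` when the `t²`-coefficient of `e_r(y + t v)` vanishes for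
every `y`. Coordinate vectors are isotropic and a linear symmetry `g` of `e_r` preserves
isotropy, so every column `v` of `g` is isotropic. At the indicator vector of an `(r-2)`-set `T`
the `t²`-coefficient is `e₂` of `v` restricted to the complement of `T`. Averaging over subsets,
`e₂(v)` vanishes on every set of size at least `n + 2 - r`, so (as `r > 2`) on the full index set
and on the one missing `u`; comparing the two gives `v_u (∑ v - v_u) = 0`. So `v` has a single
nonzero entry and `g = P_σ · diag c`. Evaluating `e_r` at indicator vectors of `r`-sets gives
`∏_{j ∈ J} c_j = 1` for every `r`-set `J`, which for `r < n` forces `c` to be a constant `r`-th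
root of unity.
-/

open Matrix

/-- The `r`-th elementary symmetric polynomial in `n` variables, evaluated at `x : Fin n → ℂ`. -/
noncomputable def esymm (n r : ℕ) (x : Fin n → ℂ) : ℂ :=
  ∑ I ∈ Finset.powersetCard r Finset.univ, ∏ i ∈ I, x i

/-- The stabilizer of the `r`-th elementary symmetric polynomial inside `GLₙ(ℂ)`. -/
def esymmStabilizer (n r : ℕ) : Subgroup (GL (Fin n) ℂ) where
  carrier := {g | ∀ x : Fin n → ℂ,
    esymm n r ((g : Matrix (Fin n) (Fin n) ℂ).mulVec x) = esymm n r x}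
  one_mem' := by
    intro x
    simp [Units.val_one, Matrix.one_mulVec]
  mul_mem' := by
    intro a b ha hb x
    rw [Units.val_mul, ← Matrix.mulVec_mulVec, ha, hb]
  inv_mem' := by
    intro a ha x
    have h := ha ((↑a⁻¹ : Matrix (Fin n) (Fin n) ℂ).mulVec x)
    rw [Matrix.mulVec_mulVec, ← Units.val_mul, mul_inv_cancel, Units.val_one,
      Matrix.one_mulVec] at h
    exact h.symm

open Finset Equiv Polynomial

namespace Finset
variable {α : Type*} [DecidableEq α]

theorem sum_powersetCard_sum_powersetCard {β : Type*} [AddCommMonoid β] (s : Finset α)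
    {k m : ℕ} (hkm : k ≤ m) (f : Finset α → Finset α → β) :
    ∑ I ∈ powersetCard m s, ∑ J ∈ powersetCard k I, f J (I \ J) =
      ∑ J ∈ powersetCard k s, ∑ K ∈ powersetCard (m - k) (s \ J), f J K := by
  rw [sum_sigma', sum_sigma']
  refine sum_bij' (fun p _ => ⟨p.2, p.1 \ p.2⟩) (fun p _ => ⟨p.1 ∪ p.2, p.1⟩) ?_ ?_ ?_ ?_
    fun _ _ => rfl
  · rintro ⟨I, J⟩ h
    simp only [mem_sigma, mem_powersetCard] at h ⊢
    exact ⟨⟨h.2.1.trans h.1.1, h.2.2⟩, sdiff_subset_sdiff h.1.1 le_rfl,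
      by rw [card_sdiff_of_subset h.2.1, h.1.2, h.2.2]⟩
  · rintro ⟨J, K⟩ h
    simp only [mem_sigma, mem_powersetCard, subset_sdiff] at h ⊢
    refine ⟨⟨union_subset h.1.1 h.2.1.1, ?_⟩, subset_union_left, h.1.2⟩
    rw [card_union_of_disjoint h.2.1.2.symm, h.1.2, h.2.2]
    omega
  · rintro ⟨I, J⟩ h
    simp only [mem_sigma, mem_powersetCard] at h
    simp [union_sdiff_of_subset h.2.1]
  · rintro ⟨J, K⟩ h
    simp only [mem_sigma, mem_powersetCard, subset_sdiff] at h
    simp [union_sdiff_cancel_left h.2.1.2.symm]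

theorem sum_powersetCard_prod_ite_mem {R : Type*} [CommSemiring R] (s T : Finset α)
    (x : α → R) :
    ∑ K ∈ powersetCard #T s, ∏ i ∈ K, (if i ∈ T then x i else 0) =
      if T ⊆ s then ∏ i ∈ T, x i else 0 := by
  have hK : ∀ K ∈ powersetCard #T s,
      ∏ i ∈ K, (if i ∈ T then x i else 0) = if K = T then ∏ i ∈ T, x i else 0 := by
    intro K hK
    rw [mem_powersetCard] at hK
    rw [prod_ite_zero]
    by_cases hKT : K = T
    · simp [hKT]
    · rw [if_neg hKT,
        if_neg fun h => hKT (eq_of_subset_of_card_le (fun i hi => h i hi) hK.2.ge)]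
  rw [sum_congr rfl hK, sum_ite_eq']
  exact if_congr (by simp) rfl rfl

theorem sum_powersetCard_eq_zero_of_card_le {K : Type*} [Field K] [CharZero K]
    {k m : ℕ} (hkm : k ≤ m) (f : Finset α → K)
    (h : ∀ U : Finset α, #U = m → ∑ J ∈ powersetCard k U, f J = 0)
    {V : Finset α} (hV : m ≤ #V) : ∑ J ∈ powersetCard k V, f J = 0 := by
  have hcount : ∑ U ∈ powersetCard m V, ∑ J ∈ powersetCard k U, f J =
      ((#V - k).choose (m - k) : K) * ∑ J ∈ powersetCard k V, f J := by
    rw [sum_powersetCard_sum_powersetCard V hkm fun J _ => f J, mul_sum]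
    refine sum_congr rfl fun J hJ => ?_
    rw [sum_const, card_powersetCard, card_sdiff_of_subset (mem_powersetCard.mp hJ).1,
      (mem_powersetCard.mp hJ).2, nsmul_eq_mul]
  rw [sum_eq_zero fun U hU => h U (mem_powersetCard.mp hU).2, eq_comm] at hcount
  exact (mul_eq_zero.mp hcount).resolve_left
    (Nat.cast_ne_zero.mpr (Nat.choose_pos (by omega)).ne')

theorem sum_powersetCard_two_insert {R : Type*} [CommSemiring R] (v : α → R) {u : α}
    {s : Finset α} (hu : u ∉ s) :
    ∑ J ∈ powersetCard 2 (insert u s), ∏ i ∈ J, v i =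
      ∑ J ∈ powersetCard 2 s, ∏ i ∈ J, v i + v u * ∑ i ∈ s, v i := by
  rw [powersetCard_succ_insert hu, sum_union, sum_image, powersetCard_one, sum_map, mul_sum]
  · refine congrArg _ (sum_congr rfl fun i hi => ?_)
    have hui : u ∉ ({i} : Finset α) := by simpa using (ne_of_mem_of_not_mem hi hu).symm
    simp [prod_insert hui]
  · intro K hK K' hK' hKK
    simp only [mem_coe, mem_powersetCard] at hK hK'
    rw [← erase_insert (notMem_mono hK.1 hu), hKK, erase_insert (notMem_mono hK'.1 hu)]
  · simp only [disjoint_left, mem_powersetCard, mem_image, not_exists, not_and]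
    intro J hJ K _ hKJ
    exact hu (hJ.1 (hKJ ▸ mem_insert_self u K))

end Finset

theorem exists_forall_ne_eq_zero_of_mul_sub_eq_zero {ι K : Type*} [Fintype ι] [Nonempty ι]
    [Field K] [CharZero K] {v : ι → K} (h : ∀ u, v u * (∑ i, v i - v u) = 0) :
    ∃ k, ∀ i ≠ k, v i = 0 := by
  classical
  set S := ∑ i, v i
  have hv : ∀ i, v i = if v i = 0 then 0 else S := fun i => by
    split_ifs with hi
    · exact hi
    · exact (sub_eq_zero.mp ((mul_eq_zero.mp (h i)).resolve_left hi)).symm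
  by_cases hS : S = 0
  · exact ⟨Classical.arbitrary ι, fun i _ => by simpa [hS] using hv i⟩
  have hcard : S = #{i | v i ≠ 0} * S := by
    conv_lhs => rw [show S = ∑ i, v i from rfl, sum_congr rfl fun i _ => hv i]
    rw [sum_ite, sum_const_zero, zero_add, sum_const, nsmul_eq_mul]
  obtain ⟨k, hk⟩ := card_eq_one.mp (Nat.cast_eq_one.mp ((mul_eq_right₀ hS).mp hcard.symm))
  refine ⟨k, fun i hik => ?_⟩
  by_contra hi
  exact hik (mem_singleton.mp (hk ▸ mem_filter.mpr ⟨mem_univ i, hi⟩))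

theorem Matrix.exists_eq_permMatrix_mul_diagonal {ι R : Type*} [Fintype ι] [DecidableEq ι]
    [CommRing R] [Nontrivial R] {M : Matrix ι ι R} (hM : IsUnit M)
    (hcol : ∀ j, ∃ k, ∀ i ≠ k, M i j = 0) :
    ∃ (σ : Perm ι) (c : ι → R), M = σ.permMatrix R * diagonal c := by
  choose τ hτ using hcol
  have hτ_surj : Function.Surjective τ := by
    intro i
    by_contra! hi
    exact (M.isUnit_iff_isUnit_det.mp hM).ne_zero
      (det_eq_zero_of_row_eq_zero i fun j => hτ j i (hi j).symm)
  obtain ⟨e, he⟩ : ∃ e : Perm ι, ∀ j, e j = τ j :=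
    ⟨.ofBijective τ ⟨Finite.injective_iff_surjective.mpr hτ_surj, hτ_surj⟩, fun _ => rfl⟩
  refine ⟨e.symm, fun j => M (τ j) j, ?_⟩
  ext i j
  rw [mul_diagonal]
  by_cases hij : i = τ j
  · simp [hij, PEquiv.toMatrix_apply, Equiv.symm_apply_eq, he]
  · simp [hτ j i hij, PEquiv.toMatrix_apply, Equiv.symm_apply_eq, he, hij]

theorem Matrix.smul_permMatrix_eq_one_iff {ι R : Type*} [Fintype ι] [DecidableEq ι] [Nonempty ι]
    [Semiring R] [Nontrivial R] {ω : R} {σ : Perm ι} :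
    ω • σ.permMatrix R = 1 ↔ ω = 1 ∧ σ = 1 := by
  refine ⟨fun h => ?_, fun ⟨hω, hσ⟩ => by simp [hω, hσ]⟩
  have hdiag : ∀ i, ω * (if σ i = i then 1 else 0) = 1 := fun i => by
    simpa [PEquiv.toMatrix_apply] using congrFun (congrFun h i) i
  have hfix : ∀ i, σ i = i := fun i => by
    by_contra hi
    simpa [hi] using hdiag i
  exact ⟨by simpa [hfix] using hdiag (Classical.arbitrary ι), Equiv.ext hfix⟩

theorem apply_eq_apply_of_prod_powersetCard_eq_one {ι M : Type*} [Fintype ι] [DecidableEq ι]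
    [CommMonoid M] {r : ℕ} (hr : 0 < r) (hrn : r < Fintype.card ι) {c : ι → M}
    (h : ∀ J : Finset ι, #J = r → ∏ j ∈ J, c j = 1) (a b : ι) : c a = c b := by
  by_cases hab : a = b
  · rw [hab]
  obtain ⟨K, hK, hKcard⟩ := exists_subset_card_eq (s := univ \ {a, b}) (n := r - 1) (by
    rw [card_sdiff_of_subset (subset_univ _), card_univ, card_pair hab]
    omega)
  have ha : a ∉ K := fun h => by simpa using hK h
  have hb : b ∉ K := fun h => by simpa using hK h
  have hKa := h (insert a K) (by rw [card_insert_of_notMem ha]; omega)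
  have hKb := h (insert b K) (by rw [card_insert_of_notMem hb]; omega)
  rw [prod_insert ha] at hKa
  rw [prod_insert hb] at hKb
  calc c a = c a * (c b * ∏ k ∈ K, c k) := by rw [hKb, mul_one]
    _ = c b * (c a * ∏ k ∈ K, c k) := mul_left_comm _ _ _
    _ = c b := by rw [hKa, mul_one]

namespace Polynomial

theorem coeff_prod_C_mul_X_add_C {ι R : Type*} [DecidableEq ι] [CommSemiring R] (s : Finset ι)
    (a b : ι → R) (k : ℕ) :
    (∏ i ∈ s, (C (a i) * X + C (b i))).coeff k =
      ∑ J ∈ powersetCard k s, (∏ i ∈ J, a i) * ∏ i ∈ s \ J, b i := by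
  rw [prod_add, finsetSum_coeff, powersetCard_eq_filter, sum_filter]
  refine sum_congr rfl fun J _ => ?_
  have hterm : (∏ i ∈ J, C (a i) * X) * ∏ i ∈ s \ J, C (b i) =
      C ((∏ i ∈ J, a i) * ∏ i ∈ s \ J, b i) * X ^ #J := by
    simp only [prod_mul_distrib, prod_const, map_mul, map_prod]
    ring
  rw [hterm, coeff_C_mul_X_pow]
  exact if_congr eq_comm rfl rfl

end Polynomial

section Esymm

variable {n r : ℕ}

theorem mem_esymmStabilizer {g : GL (Fin n) ℂ} :
    g ∈ esymmStabilizer n r ↔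
      ∀ x, esymm n r ((g : Matrix (Fin n) (Fin n) ℂ) *ᵥ x) = esymm n r x :=
  Iff.rfl

theorem esymm_eq_eval (x : Fin n → ℂ) :
    esymm n r x = MvPolynomial.eval x (MvPolynomial.esymm (Fin n) ℂ r) := by
  simp [esymm, MvPolynomial.esymm, map_sum, map_prod]

theorem esymm_comp_perm (σ : Perm (Fin n)) (x : Fin n → ℂ) :
    esymm n r (x ∘ σ) = esymm n r x := by
  rw [esymm_eq_eval, esymm_eq_eval, ← MvPolynomial.eval_rename,
    MvPolynomial.esymm_isSymmetric (Fin n) ℂ r σ]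

theorem esymm_smul (c : ℂ) (x : Fin n → ℂ) : esymm n r (c • x) = c ^ r * esymm n r x := by
  rw [esymm, esymm, mul_sum]
  refine sum_congr rfl fun I hI => ?_
  rw [← (mem_powersetCard.mp hI).2, ← prod_const, ← prod_mul_distrib]
  rfl

theorem esymm_ite_mem {J : Finset (Fin n)} (hJ : #J = r) (x : Fin n → ℂ) :
    esymm n r (fun i => if i ∈ J then x i else 0) = ∏ i ∈ J, x i := by
  subst hJ
  rw [esymm, sum_powersetCard_prod_ite_mem, if_pos (subset_univ J)]

theorem esymm_smul_permMatrix_mulVec {ω : ℂ} (hω : ω ^ r = 1) (σ : Perm (Fin n))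
    (x : Fin n → ℂ) : esymm n r ((ω • σ.permMatrix ℂ) *ᵥ x) = esymm n r x := by
  rw [smul_mulVec, permMatrix_mulVec, esymm_smul, hω, one_mul, esymm_comp_perm]

theorem exists_eq_const_of_esymm_mul (hr : 0 < r) (hrn : r < n) {c : Fin n → ℂ}
    (hc : ∀ x, esymm n r (c * x) = esymm n r x) :
    ∃ ω : ℂ, ω ^ r = 1 ∧ c = fun _ => ω := by
  have hprod : ∀ J : Finset (Fin n), #J = r → ∏ j ∈ J, c j = 1 := fun J hJ => by
    have hcJ : (c * fun i => if i ∈ J then 1 else 0) = fun i => if i ∈ J then c i else 0 := by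
      funext i
      simp [mul_ite]
    simpa [hcJ, esymm_ite_mem hJ] using hc fun i => if i ∈ J then 1 else 0
  have hconst := apply_eq_apply_of_prod_powersetCard_eq_one hr (by simpa using hrn) hprod
  obtain ⟨J, -, hJ⟩ := exists_subset_card_eq (s := (univ : Finset (Fin n))) (n := r)
    (by simpa using hrn.le)
  refine ⟨c ⟨0, by omega⟩, ?_, funext fun j => hconst j _⟩
  rw [← hprod J hJ, prod_congr rfl fun j _ => hconst j ⟨0, by omega⟩, prod_const, hJ]

noncomputable def esymmLine (r : ℕ) (y v : Fin n → ℂ) : ℂ[X] :=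
  ∑ I ∈ powersetCard r univ, ∏ i ∈ I, (C (v i) * X + C (y i))

theorem eval_esymmLine (y v : Fin n → ℂ) (t : ℂ) :
    (esymmLine r y v).eval t = esymm n r (y + t • v) := by
  simp only [esymmLine, esymm, eval_finsetSum, eval_prod, eval_add, eval_mul, eval_C, eval_X]
  exact sum_congr rfl fun I _ => prod_congr rfl fun i _ => by simp [add_comm, mul_comm]

theorem coeff_two_esymmLine (hr : 2 ≤ r) (y v : Fin n → ℂ) :
    (esymmLine r y v).coeff 2 = ∑ J ∈ powersetCard 2 univ,
      (∏ i ∈ J, v i) * ∑ K ∈ powersetCard (r - 2) Jᶜ, ∏ i ∈ K, y i := by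
  simp_rw [esymmLine, finsetSum_coeff, coeff_prod_C_mul_X_add_C, mul_sum, compl_eq_univ_sdiff]
  exact sum_powersetCard_sum_powersetCard univ hr fun J K => (∏ i ∈ J, v i) * ∏ i ∈ K, y i

/-- The `t²`-coefficient of `e_r(y + t v)` is `½ vᵀ (∇² e_r)(y) v`, so this says that `v` is
isotropic for the Hessian of `e_r` at every point. -/
def IsHessianIsotropic (r : ℕ) (v : Fin n → ℂ) : Prop :=
  ∀ y : Fin n → ℂ, (esymmLine r y v).coeff 2 = 0

theorem isHessianIsotropic_single (hr : 2 ≤ r) (j : Fin n) (c : ℂ) :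
    IsHessianIsotropic r (Pi.single j c) := by
  intro y
  rw [coeff_two_esymmLine hr]
  refine sum_eq_zero fun J hJ => ?_
  obtain ⟨i, hi, hij⟩ := exists_mem_ne (by rw [(mem_powersetCard.mp hJ).2]; norm_num) j
  rw [prod_eq_zero hi (by simp [hij]), zero_mul]

theorem IsHessianIsotropic.mulVec {M : Matrix (Fin n) (Fin n) ℂ} (hM : IsUnit M)
    (hMe : ∀ x, esymm n r (M *ᵥ x) = esymm n r x) {v : Fin n → ℂ}
    (hv : IsHessianIsotropic r v) : IsHessianIsotropic r (M *ᵥ v) := by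
  intro y
  obtain ⟨y₀, rfl⟩ := mulVec_surjective_iff_isUnit.mpr hM y
  have hline : esymmLine r (M *ᵥ y₀) (M *ᵥ v) = esymmLine r y₀ v :=
    Polynomial.funext fun t => by
      rw [eval_esymmLine, eval_esymmLine, ← mulVec_smul, ← mulVec_add, hMe]
  rw [hline]
  exact hv y₀

theorem IsHessianIsotropic.sum_powersetCard_two_eq_zero (hr : 2 ≤ r) {v : Fin n → ℂ}
    (hv : IsHessianIsotropic r v) {U : Finset (Fin n)} (hU : #U + r = n + 2) :
    ∑ J ∈ powersetCard 2 U, ∏ i ∈ J, v i = 0 := by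
  have hT : #Uᶜ = r - 2 := by
    rw [card_compl, Fintype.card_fin]
    omega
  have h := hv fun i => if i ∈ Uᶜ then 1 else 0
  simp_rw [coeff_two_esymmLine hr, ← hT, sum_powersetCard_prod_ite_mem, prod_const_one,
    mul_ite, mul_one, mul_zero, ← sum_filter, compl_subset_compl] at h
  convert h using 2
  ext J
  simp [mem_powersetCard, and_comm]

theorem IsHessianIsotropic.exists_forall_ne_eq_zero (hr : 2 < r) (hrn : r ≤ n)
    {v : Fin n → ℂ} (hv : IsHessianIsotropic r v) : ∃ k, ∀ i ≠ k, v i = 0 := by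
  have : Nonempty (Fin n) := ⟨⟨0, by omega⟩⟩
  have hlarge (V : Finset (Fin n)) (hV : n - 1 ≤ #V) :
      ∑ J ∈ powersetCard 2 V, ∏ i ∈ J, v i = 0 :=
    sum_powersetCard_eq_zero_of_card_le (m := n + 2 - r) (by omega) _
      (fun U hU => hv.sum_powersetCard_two_eq_zero hr.le (by omega)) (by omega)
  refine exists_forall_ne_eq_zero_of_mul_sub_eq_zero fun u => ?_
  have hsplit := sum_powersetCard_two_insert v (notMem_erase u univ)
  rw [insert_erase (mem_univ u), hlarge _ (by simp), hlarge _ (by simp), zero_add,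
    sum_erase_eq_sub (mem_univ u)] at hsplit
  exact hsplit.symm

theorem exists_eq_smul_permMatrix_of_mem_esymmStabilizer (hr : 2 < r) (hrn : r < n)
    {g : GL (Fin n) ℂ} (hg : g ∈ esymmStabilizer n r) :
    ∃ (σ : Perm (Fin n)) (ω : ℂ), ω ^ r = 1 ∧
      (g : Matrix (Fin n) (Fin n) ℂ) = ω • σ.permMatrix ℂ := by
  have hcol (j : Fin n) : ∃ k, ∀ i ≠ k, (g : Matrix (Fin n) (Fin n) ℂ) i j = 0 := by
    simpa [mulVec_single_one] using ((isHessianIsotropic_single hr.le j 1).mulVec g.isUnit hg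
      ).exists_forall_ne_eq_zero hr hrn.le
  obtain ⟨σ, c, hgσc⟩ := exists_eq_permMatrix_mul_diagonal g.isUnit hcol
  have hc (x : Fin n → ℂ) : esymm n r (c * x) = esymm n r x := by
    have hgx := hg x
    rwa [hgσc, ← mulVec_mulVec, permMatrix_mulVec, esymm_comp_perm,
      show diagonal c *ᵥ x = c * x from funext (mulVec_diagonal c x)] at hgx
  obtain ⟨ω, hω, rfl⟩ := exists_eq_const_of_esymm_mul (by omega) hrn hc
  refine ⟨σ, ω, hω, ?_⟩
  rw [hgσc, ← smul_one_eq_diagonal, Matrix.mul_smul, mul_one]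

noncomputable def smulPermMatrixHom (n r : ℕ) :
    rootsOfUnity r ℂ × Perm (Fin n) →* GL (Fin n) ℂ :=
  ((GeneralLinearGroup.scalar (Fin n)).comp (rootsOfUnity r ℂ).subtype).noncommCoprod
    permMatrixHom.toHomUnits fun _ _ => GeneralLinearGroup.scalar_commute _ _

theorem coe_smulPermMatrixHom (p : rootsOfUnity r ℂ × Perm (Fin n)) :
    (smulPermMatrixHom n r p : Matrix (Fin n) (Fin n) ℂ) =
      ((p.1 : ℂˣ) : ℂ) • p.2⁻¹.permMatrix ℂ := by
  change ((GeneralLinearGroup.scalar (Fin n) p.1 * permMatrixHom.toHomUnits p.2 : GL (Fin n) ℂ) :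
    Matrix (Fin n) (Fin n) ℂ) = _
  simp [smul_eq_diagonal_mul, scalar_apply]

noncomputable def esymmStabilizerHom (n r : ℕ) :
    rootsOfUnity r ℂ × Perm (Fin n) →* esymmStabilizer n r :=
  (smulPermMatrixHom n r).codRestrict _ fun p => mem_esymmStabilizer.mpr fun x => by
    rw [coe_smulPermMatrixHom]
    exact esymm_smul_permMatrix_mulVec ((mem_rootsOfUnity' r _).mp p.1.2) _ x

theorem esymmStabilizerHom_bijective (hr : 2 < r) (hrn : r < n) :
    Function.Bijective (esymmStabilizerHom n r) := by
  have : Nonempty (Fin n) := ⟨⟨0, by omega⟩⟩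
  have : NeZero r := ⟨by omega⟩
  refine ⟨(injective_iff_map_eq_one _).mpr fun p hp => ?_, fun g => ?_⟩
  · have hp' : ((p.1 : ℂˣ) : ℂ) • p.2⁻¹.permMatrix ℂ = 1 := by
      rw [← coe_smulPermMatrixHom]
      exact congrArg (fun g : esymmStabilizer n r => ((g : GL (Fin n) ℂ) :
        Matrix (Fin n) (Fin n) ℂ)) hp
    obtain ⟨hζ, hσ⟩ := smul_permMatrix_eq_one_iff.mp hp'
    exact Prod.ext (Subtype.ext (Units.ext hζ)) (inv_eq_one.mp hσ)
  · obtain ⟨σ, ω, hω, hg⟩ := exists_eq_smul_permMatrix_of_mem_esymmStabilizer hr hrn g.2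
    refine ⟨(rootsOfUnity.mkOfPowEq ω hω, σ⁻¹), Subtype.ext (Units.ext ?_)⟩
    change (smulPermMatrixHom n r _ : Matrix (Fin n) (Fin n) ℂ) = _
    rw [coe_smulPermMatrixHom, inv_inv, rootsOfUnity.coe_mkOfPowEq, hg]

end Esymm

/-- Let `2 < r < n`. A `g ∈ GLₙ(ℂ)` satisfies `e_r(g·x) = e_r(x)` for all
`x ∈ ℂⁿ` if and only if `g = ω • P_σ` for a permutation `σ` of `{1,…,n}` and an `r`-th root
of unity `ω`. In particular the stabilizer of `e_r` in `GLₙ(ℂ)` is isomorphic to the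
semidirect product of the symmetric group `Sₙ` with the group `ℤ_r` of `r`-th roots of
unity (the action being trivial). -/
theorem esymm_stabilizer_eq (n r : ℕ) (hr : 2 < r) (hrn : r < n) :
    (∀ g : GL (Fin n) ℂ,
      (∀ x : Fin n → ℂ,
          esymm n r ((g : Matrix (Fin n) (Fin n) ℂ).mulVec x) = esymm n r x) ↔
        ∃ (σ : Equiv.Perm (Fin n)) (ω : ℂ), ω ^ r = 1 ∧
          (g : Matrix (Fin n) (Fin n) ℂ) = ω • σ.permMatrix ℂ) ∧
    Nonempty (esymmStabilizer n r ≃* SemidirectProduct (rootsOfUnity r ℂ) (Equiv.Perm (Fin n)) 1) := by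
  refine ⟨fun g => ⟨exists_eq_smul_permMatrix_of_mem_esymmStabilizer hr hrn, ?_⟩, ?_⟩
  · rintro ⟨σ, ω, hω, hg⟩ x
    rw [hg]
    exact esymm_smul_permMatrix_mulVec hω σ x
  · exact ⟨(MulEquiv.ofBijective _ (esymmStabilizerHom_bijective hr hrn)).symm.trans
      SemidirectProduct.mulEquivProd.symm⟩
end

section
/- Let n and r be integers with 2 < r < n, and let a ∈ ℂⁿ. For b ∈ ℂⁿ define the univariate polynomial f_{a,b}(X) = e_r(X·a_1 + b_1, …, X·a_n + b_n) ∈ ℂ[X]. Then deg(f_{a,b}) ≤ 1 for all b ∈ ℂⁿ if and only if a has at most one nonzero entry. -/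
/-- For `a b : ℂⁿ`, the univariate polynomial `f_{a,b}(X) = e_r(X·a₁ + b₁, …, X·aₙ + bₙ)`. -/
noncomputable def fPoly (n r : ℕ) (a b : Fin n → ℂ) : Polynomial ℂ :=
  ∑ I ∈ Finset.powersetCard r Finset.univ,
    ∏ i ∈ I, (Polynomial.X * Polynomial.C (a i) + Polynomial.C (b i))

open Finset Polynomial

variable {ι R : Type*}

theorem sdiff_subset_iff_of_card_eq [DecidableEq ι] {I L t : Finset ι} (htI : t ⊆ I)
    (hcard : I.card = L.card + t.card) : I \ t ⊆ L ↔ L ⊆ I ∧ t = I \ L := by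
  constructor
  · intro hsub
    have hL : I \ t = L :=
      eq_of_subset_of_card_le hsub (by rw [card_sdiff_of_subset htI]; omega)
    exact ⟨hL ▸ sdiff_subset, by rw [← hL, Finset.sdiff_sdiff_eq_self htI]⟩
  · rintro ⟨-, rfl⟩
    rw [sdiff_sdiff_right_self]
    exact inf_le_right

section Semiring

variable [CommSemiring R] [DecidableEq ι]

theorem sum_powersetCard_succ_insert (f : ι → R) {s : Finset ι} {j : ι} (hj : j ∉ s) (k : ℕ) :
    ∑ t ∈ (insert j s).powersetCard (k + 1), ∏ i ∈ t, f i =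
      ∑ t ∈ s.powersetCard (k + 1), ∏ i ∈ t, f i + f j * ∑ t ∈ s.powersetCard k, ∏ i ∈ t, f i := by
  have hjt : ∀ t ∈ s.powersetCard k, j ∉ t := fun t ht h => hj ((mem_powersetCard.1 ht).1 h)
  rw [powersetCard_succ_insert hj, sum_union, sum_image, mul_sum]
  · exact congrArg _ (sum_congr rfl fun t ht => prod_insert (hjt t ht))
  · intro t ht u hu htu
    rw [← erase_insert (hjt t ht), ← erase_insert (hjt u hu), htu]
  · refine disjoint_left.2 fun t ht ht' => ?_
    obtain ⟨u, -, rfl⟩ := mem_image.1 ht'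
    exact hj ((mem_powersetCard.1 ht).1 (mem_insert_self j u))

theorem sum_sum_powersetCard_erase (f : ι → R) (U : Finset ι) (k : ℕ) :
    ∑ j ∈ U, ∑ t ∈ (U.erase j).powersetCard k, ∏ i ∈ t, f i =
      (U.card - k) • ∑ t ∈ U.powersetCard k, ∏ i ∈ t, f i := by
  rw [sum_comm' (t' := U.powersetCard k) (s' := fun t => U \ t), smul_sum]
  · refine sum_congr rfl fun t ht => ?_
    obtain ⟨htU, htk⟩ := mem_powersetCard.1 ht
    rw [sum_const, card_sdiff_of_subset htU, htk]
  · intro j t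
    simp only [mem_powersetCard, mem_sdiff, subset_erase]
    tauto

theorem sum_powersetCard_prod_eq_zero_of_le_card [IsAddTorsionFree R] (f : ι → R) {k m : ℕ}
    (hkm : k ≤ m) (h : ∀ T : Finset ι, T.card = m → ∑ t ∈ T.powersetCard k, ∏ i ∈ t, f i = 0)
    {U : Finset ι} (hU : m ≤ U.card) : ∑ t ∈ U.powersetCard k, ∏ i ∈ t, f i = 0 := by
  generalize hN : U.card = N at hU
  induction N, hU using Nat.le_induction generalizing U with
  | base => exact h U hN
  | succ N hmN ih =>
    have hsum := sum_sum_powersetCard_erase f U k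
    rw [sum_eq_zero fun j hj => ih (by rw [card_erase_of_mem hj, hN]; rfl), hN, eq_comm,
      nsmul_eq_zero_iff] at hsum
    exact hsum.resolve_right (by omega)

theorem coeff_prod_X_mul_C_add_C (s : Finset ι) (a b : ι → R) (k : ℕ) :
    (∏ i ∈ s, (X * C (a i) + C (b i))).coeff k =
      ∑ t ∈ s.powersetCard k, (∏ i ∈ t, a i) * ∏ i ∈ s \ t, b i := by
  have hterm : ∀ t ∈ s.powerset, (∏ i ∈ t, X * C (a i)) * ∏ i ∈ s \ t, C (b i) =
      C ((∏ i ∈ t, a i) * ∏ i ∈ s \ t, b i) * X ^ t.card := by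
    intro t _
    simp only [prod_mul_distrib, prod_const, map_mul, map_prod]
    ring
  rw [prod_add, sum_congr rfl hterm, finsetSum_coeff, powersetCard_eq_filter, sum_filter]
  refine sum_congr rfl fun t _ => ?_
  rw [coeff_C_mul_X_pow]
  simp only [eq_comm]

theorem sum_powersetCard_mul_prod_indicator (a : ι → R) {I L : Finset ι} {k : ℕ}
    (hI : I.card = L.card + k) :
    ∑ t ∈ I.powersetCard k, (∏ i ∈ t, a i) * ∏ i ∈ I \ t, (if i ∈ L then 1 else 0) =
      if L ⊆ I then ∏ i ∈ I \ L, a i else 0 := by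
  have hcond : ∀ t ∈ I.powersetCard k, (I \ t ⊆ L ↔ L ⊆ I ∧ t = I \ L) := fun t ht =>
    sdiff_subset_iff_of_card_eq (mem_powersetCard.1 ht).1 (by rw [(mem_powersetCard.1 ht).2, hI])
  simp only [prod_boole, ← subset_iff, mul_ite, mul_one, mul_zero]
  rw [sum_congr rfl fun t ht => if_congr (hcond t ht) rfl rfl]
  split_ifs with hLI
  · simp only [hLI, true_and]
    rw [sum_ite_eq', if_pos (mem_powersetCard.2 ⟨sdiff_subset, by
      rw [card_sdiff_of_subset hLI]; omega⟩)]
  · simp [hLI]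

theorem coeff_sum_powersetCard_prod_X_mul_C_add_indicator [Fintype ι] (a : ι → R)
    (L : Finset ι) {k r : ℕ} (hr : L.card + k = r) :
    (∑ I ∈ univ.powersetCard r, ∏ i ∈ I, (X * C (a i) + C (if i ∈ L then 1 else 0))).coeff k =
      ∑ t ∈ Lᶜ.powersetCard k, ∏ i ∈ t, a i := by
  rw [finsetSum_coeff, sum_congr rfl fun I hI => by
    rw [coeff_prod_X_mul_C_add_C, sum_powersetCard_mul_prod_indicator a
      (by rw [(mem_powersetCard.1 hI).2, hr])], ← sum_filter]
  have hdisj : ∀ {t : Finset ι}, t ⊆ Lᶜ → Disjoint L t := fun ht =>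
    disjoint_left.2 fun _ hxL hxt => mem_compl.1 (ht hxt) hxL
  refine sum_nbij' (· \ L) (L ∪ ·) ?_ ?_ ?_ ?_ (fun _ _ => rfl) <;>
    simp only [mem_filter, mem_powersetCard, subset_univ, true_and]
  · rintro I ⟨hIr, hLI⟩
    refine ⟨fun x hx => mem_compl.2 (mem_sdiff.1 hx).2, ?_⟩
    rw [card_sdiff_of_subset hLI]
    omega
  · rintro t ⟨htL, htk⟩
    exact ⟨by rw [card_union_of_disjoint (hdisj htL)]; omega, subset_union_left⟩
  · exact fun I ⟨_, hLI⟩ => union_sdiff_of_subset hLI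
  · exact fun t ⟨htL, _⟩ => union_sdiff_cancel_left (hdisj htL)

end Semiring

theorem natDegree_prod_X_mul_C_add_C_le [CommSemiring R] [DecidableEq R] (s : Finset ι)
    (a b : ι → R) : (∏ i ∈ s, (X * C (a i) + C (b i))).natDegree ≤ #{i ∈ s | a i ≠ 0} := by
  rw [card_filter]
  refine (natDegree_prod_le _ _).trans (sum_le_sum fun i _ => ?_)
  split_ifs with hi
  · rw [X_mul_C]
    exact natDegree_linear_le
  · simp [not_ne_iff.1 hi]

section Domain

variable [CommRing R] [IsDomain R] [CharZero R] [Fintype ι] [DecidableEq R]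

theorem card_filter_ne_zero_le_one_of_mul_sum_sub_eq_zero (a : ι → R)
    (h : ∀ j, a j * (∑ i, a i - a j) = 0) : #{i | a i ≠ 0} ≤ 1 := by
  set σ := ∑ i, a i
  have hval : ∀ j, a j ≠ 0 → a j = σ := fun j hj =>
    (sub_eq_zero.1 ((mul_eq_zero.1 (h j)).resolve_left hj)).symm
  by_contra! hc
  obtain ⟨i, hi, -⟩ := one_lt_card.1 hc
  have hai := (mem_filter.1 hi).2
  have hσ : σ ≠ 0 := hval i hai ▸ hai
  have hcount : (#{i | a i ≠ 0} : R) * σ = 1 * σ := calc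
    _ = ∑ i with a i ≠ 0, σ := by rw [sum_const, nsmul_eq_mul]
    _ = ∑ i with a i ≠ 0, a i := sum_congr rfl fun j hj => (hval j (mem_filter.1 hj).2).symm
    _ = 1 * σ := by rw [sum_filter_ne_zero, one_mul]
  have := Nat.cast_eq_one.1 (mul_right_cancel₀ hσ hcount)
  omega

theorem card_filter_ne_zero_le_one_of_sum_powersetCard_two_eq_zero [DecidableEq ι] (a : ι → R)
    {m : ℕ} (h2m : 2 ≤ m) (hm : m < Fintype.card ι)
    (h : ∀ T : Finset ι, T.card = m → ∑ t ∈ T.powersetCard 2, ∏ i ∈ t, a i = 0) :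
    #{i | a i ≠ 0} ≤ 1 := by
  refine card_filter_ne_zero_le_one_of_mul_sum_sub_eq_zero a fun j => ?_
  have hzero := fun (U : Finset ι) (hU : m ≤ #U) =>
    sum_powersetCard_prod_eq_zero_of_le_card a h2m h hU
  have hins := sum_powersetCard_succ_insert a (notMem_erase j univ) 1
  rw [insert_erase (mem_univ j), hzero _ (by rw [card_univ]; omega),
    hzero _ (by rw [card_erase_of_mem (mem_univ j), card_univ]; omega), powersetCard_one,
    sum_map, zero_add] at hins
  simpa [sum_erase_eq_sub] using hins.symm

end Domain

theorem natDegree_fPoly_le (n r : ℕ) (a b : Fin n → ℂ) :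
    (fPoly n r a b).natDegree ≤ #{i | a i ≠ 0} :=
  natDegree_sum_le_of_forall_le _ _ fun I _ => (natDegree_prod_X_mul_C_add_C_le I a b).trans
    (card_le_card (filter_subset_filter _ (subset_univ I)))

/-- For `2 < r < n` and `a ∈ ℂⁿ`, one has `deg f_{a,b} ≤ 1` for all `b ∈ ℂⁿ`
if and only if `a` has at most one nonzero entry. -/
theorem degree_le_one_iff_at_most_one_nonzero (n r : ℕ) (hr : 2 < r) (hrn : r < n)
    (a : Fin n → ℂ) :
    (∀ b : Fin n → ℂ, (fPoly n r a b).degree ≤ 1) ↔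
      (Finset.univ.filter fun i => a i ≠ 0).card ≤ 1 := by
  refine ⟨fun h => ?_, fun ha b =>
    natDegree_le_iff_degree_le.1 ((natDegree_fPoly_le n r a b).trans ha)⟩
  refine card_filter_ne_zero_le_one_of_sum_powersetCard_two_eq_zero a (m := n - r + 2)
    (by omega) (by rw [Fintype.card_fin]; omega) fun T hT => ?_
  have hL : Tᶜ.card + 2 = r := by rw [card_compl, hT, Fintype.card_fin]; omega
  rw [← compl_compl T, ← coeff_sum_powersetCard_prod_X_mul_C_add_indicator a Tᶜ hL]
  exact coeff_eq_zero_of_degree_lt ((h _).trans_lt (by norm_num))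
end

section
/- Let n and r be integers with 2 < r < n, and let a ∈ ℂⁿ. Suppose that for every b ∈ ℂⁿ the univariate polynomial f_{a,b}(X) = e_r(X·a_1 + b_1, …, X·a_n + b_n) has degree at most 1. Then for every integer s with 0 ≤ s ≤ r−2 and every subset I ⊆ {1,…,n} with |I| = n − s, the (r−s)-th elementary symmetric polynomial of the entries of a indexed by I vanishes: e_{r−s}(a_I) = 0. -/
/-- Let `2 < r < n` and `a ∈ ℂⁿ`. If `deg f_{a,b} ≤ 1` for all `b`, then for
every `s` with `0 ≤ s ≤ r - 2` and every subset `I ⊆ {1,…,n}` with `|I| = n - s`, the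
`(r-s)`-th elementary symmetric polynomial of the entries of `a` indexed by `I` vanishes. -/
theorem esymm_vanishes_of_degree_le_one (n r : ℕ) (hr : 2 < r) (hrn : r < n)
    (a : Fin n → ℂ) (hdeg : ∀ b : Fin n → ℂ, (fPoly n r a b).degree ≤ 1) :
    ∀ s : ℕ, s ≤ r - 2 → ∀ I : Finset (Fin n), I.card = n - s →
      ∑ J ∈ Finset.powersetCard (r - s) I, ∏ j ∈ J, a j = 0 := by
  intro s hs I hI
  have hq2 : 2 ≤ r - s := by omega
  have hIc : Iᶜ.card = s := by
    have h := Finset.card_compl I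
    simp only [Fintype.card_fin] at h
    omega
  set b : Fin n → ℂ := fun i => if i ∈ I then 0 else 1 with hb
  have hb1 : ∀ i ∈ Iᶜ, b i = 1 := by
    intro i hi
    simp only [Finset.mem_compl] at hi
    simp [hb, hi]
  -- The coefficient vanishes by the degree hypothesis
  have h0 : (fPoly n r a b).coeff (r - s) = 0 := by
    apply Polynomial.coeff_eq_zero_of_degree_lt
    refine lt_of_le_of_lt (hdeg b) ?_
    exact_mod_cast Nat.lt_of_lt_of_le one_lt_two hq2
  -- Compute the coefficient as a double sum
  have hcoeff : (fPoly n r a b).coeff (r - s)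
      = ∑ J ∈ Finset.powersetCard r Finset.univ, ∑ t ∈ J.powerset,
          (if t.card = r - s then (∏ i ∈ t, a i) * (∏ i ∈ J \ t, b i) else 0) := by
    unfold fPoly
    rw [Polynomial.finset_sum_coeff]
    refine Finset.sum_congr rfl fun J _ => ?_
    rw [Finset.prod_add, Polynomial.finset_sum_coeff]
    refine Finset.sum_congr rfl fun t _ => ?_
    rw [Finset.prod_mul_distrib, Finset.prod_const, ← map_prod, ← map_prod,
      mul_assoc, ← Polynomial.C_mul, mul_comm (Polynomial.X ^ t.card),
      Polynomial.coeff_C_mul, Polynomial.coeff_X_pow]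
    by_cases h : t.card = r - s
    · simp [h]
    · simp [h, Ne.symm h]
  -- Each inner sum collapses
  have hinner : ∀ J ∈ Finset.powersetCard r Finset.univ,
      (∑ t ∈ J.powerset,
        (if t.card = r - s then (∏ i ∈ t, a i) * (∏ i ∈ J \ t, b i) else 0))
      = if Iᶜ ⊆ J then ∏ i ∈ J \ Iᶜ, a i else 0 := by
    intro J hJ
    rw [Finset.mem_powersetCard] at hJ
    have hJcard : J.card = r := hJ.2
    have key : ∀ t ∈ J.powerset, t.card = r - s → ¬ (J \ t = Iᶜ) →
        (∏ i ∈ J \ t, b i) = 0 := by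
      intro t ht htc hne
      rw [Finset.mem_powerset] at ht
      have hcard : (J \ t).card = s := by
        rw [Finset.card_sdiff_of_subset ht, hJcard, htc]; omega
      by_cases hsub : J \ t ⊆ Iᶜ
      · exact absurd (Finset.eq_of_subset_of_card_le hsub (by omega)) hne
      · obtain ⟨i, hiJ, hiI⟩ := Finset.not_subset.mp hsub
        refine Finset.prod_eq_zero hiJ ?_
        simp only [Finset.mem_compl, not_not] at hiI
        simp [hb, hiI]
    by_cases hc : Iᶜ ⊆ J
    · rw [if_pos hc]
      have hkey : J \ (J \ Iᶜ) = Iᶜ := by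
        rw [Finset.sdiff_sdiff_self_left, Finset.inter_eq_right.mpr hc]
      have hcard' : (J \ Iᶜ).card = r - s := by
        rw [Finset.card_sdiff_of_subset hc, hJcard, hIc]
      have hval : (if (J \ Iᶜ).card = r - s then
          (∏ i ∈ J \ Iᶜ, a i) * (∏ i ∈ J \ (J \ Iᶜ), b i) else 0) = ∏ i ∈ J \ Iᶜ, a i := by
        rw [if_pos hcard', hkey, Finset.prod_congr rfl hb1, Finset.prod_const_one, mul_one]
      rw [← hval]
      refine Finset.sum_eq_single (J \ Iᶜ) ?_ ?_
      · intro t ht hne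
        by_cases htc : t.card = r - s
        · rw [if_pos htc]
          have hne' : ¬ (J \ t = Iᶜ) := by
            intro h
            apply hne
            rw [Finset.mem_powerset] at ht
            have hsub : t ⊆ J \ Iᶜ := by
              intro x hx
              rw [Finset.mem_sdiff]
              refine ⟨ht hx, fun hxc => ?_⟩
              rw [← h, Finset.mem_sdiff] at hxc
              exact hxc.2 hx
            exact Finset.eq_of_subset_of_card_le hsub (by rw [hcard', htc])
          rw [key t ht htc hne', mul_zero]
        · rw [if_neg htc]
      · intro h
        exact absurd (Finset.mem_powerset.mpr Finset.sdiff_subset) h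
    · rw [if_neg hc]
      refine Finset.sum_eq_zero fun t ht => ?_
      by_cases htc : t.card = r - s
      · rw [if_pos htc]
        have hne' : ¬ (J \ t = Iᶜ) := fun h => hc (h ▸ Finset.sdiff_subset)
        rw [key t ht htc hne', mul_zero]
      · rw [if_neg htc]
  rw [hcoeff, Finset.sum_congr rfl hinner, ← Finset.sum_filter] at h0
  rw [← h0]
  refine Finset.sum_nbij' (fun K => K ∪ Iᶜ) (fun J => J \ Iᶜ) ?_ ?_ ?_ ?_ ?_
  · intro K hK
    rw [Finset.mem_powersetCard] at hK
    have hdisj : Disjoint K Iᶜ := (disjoint_compl_right.mono_left hK.1)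
    rw [Finset.mem_filter, Finset.mem_powersetCard]
    refine ⟨⟨Finset.subset_univ _, ?_⟩, Finset.subset_union_right⟩
    rw [Finset.card_union_of_disjoint hdisj, hK.2, hIc]
    omega
  · intro J hJ
    rw [Finset.mem_filter, Finset.mem_powersetCard] at hJ
    rw [Finset.mem_powersetCard]
    constructor
    · intro x hx
      rw [Finset.mem_sdiff, Finset.mem_compl] at hx
      exact not_not.mp hx.2
    · rw [Finset.card_sdiff_of_subset hJ.2, hJ.1.2, hIc]
  · intro K hK
    rw [Finset.mem_powersetCard] at hK
    exact Finset.union_sdiff_cancel_right ((disjoint_compl_right.mono_left hK.1))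
  · intro J hJ
    rw [Finset.mem_filter] at hJ
    exact Finset.sdiff_union_of_subset hJ.2
  · intro K hK
    rw [Finset.mem_powersetCard] at hK
    rw [Finset.union_sdiff_cancel_right ((disjoint_compl_right.mono_left hK.1))]
end

section
/- Let n and r be integers with 2 < r < n, and let a ∈ ℂⁿ be such that a_1 ≠ a_2 and e_2(a_I) = 0 for every subset I ⊆ {1,…,n} with |I| = n − r + 2. Then for every subset J ⊆ {3,…,n} with |J| = n − r + 1, the sum Σ_{j∈J} a_j equals 0. -/
lemma key_insert_split {n : ℕ} (a : Fin n → ℂ) (J : Finset (Fin n)) (x : Fin n) (hx : x ∉ J) :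
    ∑ P ∈ Finset.powersetCard 2 (insert x J), ∏ j ∈ P, a j =
      (∑ P ∈ Finset.powersetCard 2 J, ∏ j ∈ P, a j) + a x * ∑ j ∈ J, a j := by
  rw [show (2 : ℕ) = Nat.succ 1 from rfl, Finset.powersetCard_succ_insert hx,
    Finset.sum_union]
  · congr 1
    rw [Finset.sum_image]
    · rw [Finset.mul_sum]
      rw [Finset.powersetCard_one, Finset.sum_map]
      refine Finset.sum_congr rfl fun j hj => ?_
      have hxj : x ∉ ({j} : Finset (Fin n)) := by
        simp only [Finset.mem_singleton]
        rintro rfl; exact hx hj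
      simp only [Function.Embedding.coeFn_mk]
      rw [Finset.prod_insert hxj, Finset.prod_singleton]
    · intro P hP Q hQ hPQ
      have hxP : x ∉ P := fun h => hx ((Finset.mem_powersetCard.mp hP).1 h)
      have hxQ : x ∉ Q := fun h => hx ((Finset.mem_powersetCard.mp hQ).1 h)
      have := congrArg (Finset.erase · x) hPQ
      simpa [Finset.erase_insert, hxP, hxQ] using this
  · rw [Finset.disjoint_right]
    rintro P hP hP'
    obtain ⟨Q, _, rfl⟩ := Finset.mem_image.mp hP
    exact hx ((Finset.mem_powersetCard.mp hP').1 (Finset.mem_insert_self x Q))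

/-- Let `2 < r < n` and `a ∈ ℂⁿ` with `a₁ ≠ a₂` and `e₂(a_I) = 0` for every
`I ⊆ {1,…,n}` with `|I| = n - r + 2`. Then for every `J ⊆ {3,…,n}` with `|J| = n - r + 1`,
the sum `Σ_{j ∈ J} a j` is `0`. -/
theorem sum_eq_zero_of_esymm_two_vanishes (n r : ℕ) (hr : 2 < r) (hrn : r < n)
    (a : Fin n → ℂ) (h12 : a ⟨0, by omega⟩ ≠ a ⟨1, by omega⟩)
    (h2 : ∀ I : Finset (Fin n), I.card = n - r + 2 →
      ∑ P ∈ Finset.powersetCard 2 I, ∏ j ∈ P, a j = 0) :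
    ∀ J : Finset (Fin n), J ⊆ Finset.univ \ {⟨0, by omega⟩, ⟨1, by omega⟩} →
      J.card = n - r + 1 → ∑ j ∈ J, a j = 0 := by
  intro J hJ hcard
  set x0 : Fin n := ⟨0, by omega⟩
  set x1 : Fin n := ⟨1, by omega⟩
  have h0 : x0 ∉ J := fun h => by simpa using (hJ h)
  have h1 : x1 ∉ J := fun h => by simpa using (hJ h)
  have e0 := h2 (insert x0 J) (by rw [Finset.card_insert_of_notMem h0, hcard])
  have e1 := h2 (insert x1 J) (by rw [Finset.card_insert_of_notMem h1, hcard])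
  rw [key_insert_split a J x0 h0] at e0
  rw [key_insert_split a J x1 h1] at e1
  have : (a x0 - a x1) * ∑ j ∈ J, a j = 0 := by ring_nf; linear_combination e0 - e1
  rcases mul_eq_zero.mp this with h | h
  · exact absurd (sub_eq_zero.mp h) h12
  · exact h
end

section
/- Let n and r be integers with 4 ≤ r < n, and let a ∈ ℂⁿ be such that e_2(a_I) = 0 for every subset I ⊆ {1,…,n} with |I| = n − r + 2. Then a has at most one nonzero entry. -/
lemma E2_insert {α : Type*} [DecidableEq α] (a : α → ℂ) {J : Finset α} {x : α} (hx : x ∉ J) :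
    ∑ P ∈ (insert x J).powersetCard 2, ∏ j ∈ P, a j
      = (∑ P ∈ J.powersetCard 2, ∏ j ∈ P, a j) + a x * ∑ j ∈ J, a j := by
  rw [show (2:ℕ) = Nat.succ 1 from rfl, Finset.powersetCard_succ_insert hx]
  rw [Finset.sum_union]
  · congr 1
    rw [Finset.sum_image ?inj]
    case inj =>
      intro P hP Q hQ h
      have hxP : x ∉ P := fun h => hx (Finset.mem_powersetCard.1 hP |>.1 h)
      have hxQ : x ∉ Q := fun h => hx (Finset.mem_powersetCard.1 hQ |>.1 h)
      have := congrArg (Finset.erase · x) h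
      simpa [Finset.erase_insert, hxP, hxQ] using this
    rw [Finset.powersetCard_one, Finset.sum_map, Finset.mul_sum]
    apply Finset.sum_congr rfl
    intro i hi
    have hxi : x ∉ ({i} : Finset α) := by
      simp only [Finset.mem_singleton]
      rintro rfl; exact hx hi
    simp [Finset.prod_insert hxi]
  · rw [Finset.disjoint_left]
    intro P hP hP2
    obtain ⟨Q, hQ, rfl⟩ := Finset.mem_image.1 hP2
    exact (fun h => hx (Finset.mem_powersetCard.1 hP |>.1 h)) (Finset.mem_insert_self x Q)

/-- Let `4 ≤ r < n` and `a ∈ ℂⁿ` with `e₂(a_I) = 0` for every subset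
`I ⊆ {1,…,n}` with `|I| = n - r + 2`. Then `a` has at most one nonzero entry. -/
theorem at_most_one_nonzero_of_esymm_two_vanishes (n r : ℕ) (hr : 4 ≤ r) (hrn : r < n)
    (a : Fin n → ℂ)
    (h2 : ∀ I : Finset (Fin n), I.card = n - r + 2 →
      ∑ P ∈ Finset.powersetCard 2 I, ∏ j ∈ P, a j = 0) :
    (Finset.univ.filter fun i => a i ≠ 0).card ≤ 1 := by
  have hn5 : 5 ≤ n := by omega
  set m := n - r with hm
  have hm1 : 1 ≤ m := by omega
  have hcardU : (Finset.univ : Finset (Fin n)).card = n := by simp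
  by_cases hconst : ∀ x y : Fin n, a x = a y
  · -- constant case: all entries zero
    have hz : ∀ i : Fin n, a i = 0 := by
      intro i
      obtain ⟨I, hIsub, hIcard⟩ := Finset.exists_subset_card_eq
        (show n - r + 2 ≤ (Finset.univ : Finset (Fin n)).card by omega)
      have hE := h2 I hIcard
      have hconstprod : ∀ P ∈ I.powersetCard 2, ∏ j ∈ P, a j = a i ^ 2 := by
        intro P hP
        have hPcard := (Finset.mem_powersetCard.1 hP).2
        rw [Finset.prod_congr rfl (fun j _ => hconst j i), Finset.prod_const, hPcard]
      rw [Finset.sum_congr rfl hconstprod, Finset.sum_const, Finset.card_powersetCard,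
        hIcard] at hE
      have hchoose : (0:ℕ) < (n - r + 2).choose 2 := Nat.choose_pos (by omega)
      have : a i ^ 2 = 0 := by
        have := hE
        rw [nsmul_eq_mul] at this
        have hc : ((n - r + 2).choose 2 : ℂ) ≠ 0 := Nat.cast_ne_zero.2 hchoose.ne'
        exact (mul_eq_zero.1 this).resolve_left hc
      exact pow_eq_zero_iff (by norm_num) |>.1 this
    rw [Finset.filter_false_of_mem (fun i _ => by simp [hz i])]
    simp
  · push_neg at hconst
    obtain ⟨x, y, hxy⟩ := hconst
    have hxyne : x ≠ y := fun h => hxy (by rw [h])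
    set U : Finset (Fin n) := Finset.univ \ {x, y} with hU
    have hUcard : U.card = n - 2 := by
      rw [hU, Finset.card_sdiff_of_subset (by simp)]
      rw [Finset.card_pair hxyne, hcardU]
    -- Step 1: every (m+1)-subset of U has zero sum
    have step1 : ∀ J : Finset (Fin n), J ⊆ U → J.card = m + 1 → ∑ j ∈ J, a j = 0 := by
      intro J hJU hJcard
      have hxJ : x ∉ J := fun h => by have := hJU h; simp [hU] at this
      have hyJ : y ∉ J := fun h => by have := hJU h; simp [hU] at this
      have hx2 := h2 (insert x J) (by rw [Finset.card_insert_of_notMem hxJ, hJcard])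
      have hy2 := h2 (insert y J) (by rw [Finset.card_insert_of_notMem hyJ, hJcard])
      rw [E2_insert a hxJ] at hx2
      rw [E2_insert a hyJ] at hy2
      have hdiff : (a x - a y) * ∑ j ∈ J, a j = 0 := by ring_nf; linear_combination hx2 - hy2
      exact (mul_eq_zero.1 hdiff).resolve_left (sub_ne_zero.2 hxy)
    -- Step 2: entries outside {x,y} vanish
    have step2 : ∀ u : Fin n, u ≠ x → u ≠ y → a u = 0 := by
      intro u hux huy
      have huU : u ∈ U := by simp [hU, hux, huy]
      have hVcard : m + 1 ≤ (U.erase u).card := by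
        rw [Finset.card_erase_of_mem huU, hUcard]; omega
      obtain ⟨K, hKsub, hKcard⟩ := Finset.exists_subset_card_eq hVcard
      have hKU : K ⊆ U := hKsub.trans (Finset.erase_subset _ _)
      have hSK : ∑ j ∈ K, a j = 0 := step1 K hKU hKcard
      have hKne : K.Nonempty := Finset.card_pos.1 (by omega)
      have haw : ∀ w ∈ K, a w = a u := by
        intro w hw
        have huK : u ∉ K := fun h => by simpa using hKsub h
        have huKw : u ∉ K.erase w := fun h => huK (Finset.erase_subset _ _ h)
        have hJcard : (insert u (K.erase w)).card = m + 1 := by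
          rw [Finset.card_insert_of_notMem huKw, Finset.card_erase_of_mem hw, hKcard]
          omega
        have hJsub : insert u (K.erase w) ⊆ U := by
          intro z hz
          rcases Finset.mem_insert.1 hz with rfl | hz
          · exact huU
          · exact hKU (Finset.erase_subset _ _ hz)
        have hSJ := step1 _ hJsub hJcard
        rw [Finset.sum_insert huKw] at hSJ
        have herase : ∑ j ∈ K.erase w, a j = (∑ j ∈ K, a j) - a w := by
          rw [← Finset.add_sum_erase K a hw]; ring
        rw [herase, hSK] at hSJ
        linear_combination -hSJ
      have : (0:ℂ) = (m + 1 : ℕ) * a u := by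
        rw [← hSK, Finset.sum_congr rfl haw, Finset.sum_const, hKcard, nsmul_eq_mul]
      have hmne : ((m + 1 : ℕ) : ℂ) ≠ 0 := Nat.cast_ne_zero.2 (Nat.succ_ne_zero m)
      exact (mul_eq_zero.1 this.symm).resolve_left hmne
    -- Step 3: a x * a y = 0
    have step3 : a x * a y = 0 := by
      obtain ⟨K, hKsub, hKcard⟩ := Finset.exists_subset_card_eq
        (show m ≤ U.card by omega)
      have hxK : x ∉ K := fun h => by have := (Finset.erase_subset _ _ : U.erase y ⊆ U) ; have := hKsub h; simp [hU] at this
      have hyK : y ∉ K := fun h => by have := hKsub h; simp [hU] at this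
      have hKz : ∀ j ∈ K, a j = 0 := by
        intro j hj
        have := hKsub hj
        simp only [hU, Finset.mem_sdiff, Finset.mem_insert, Finset.mem_singleton] at this
        exact step2 j (fun h => this.2 (Or.inl h)) (fun h => this.2 (Or.inr h))
      have hSK : ∑ j ∈ K, a j = 0 := Finset.sum_eq_zero hKz
      have hE2K : ∑ P ∈ K.powersetCard 2, ∏ j ∈ P, a j = 0 := by
        apply Finset.sum_eq_zero
        intro P hP
        have ⟨hPK, hPcard⟩ := Finset.mem_powersetCard.1 hP
        obtain ⟨j, hj⟩ := Finset.card_pos.1 (by omega : 0 < P.card)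
        exact Finset.prod_eq_zero hj (hKz j (hPK hj))
      have hxyK : x ∉ insert y K := by
        simp only [Finset.mem_insert]
        rintro (rfl | h)
        · exact hxyne rfl
        · exact hxK h
      have hIcard : (insert x (insert y K)).card = n - r + 2 := by
        rw [Finset.card_insert_of_notMem hxyK, Finset.card_insert_of_notMem hyK, hKcard]
      have hE := h2 _ hIcard
      rw [E2_insert a hxyK, E2_insert a hyK, Finset.sum_insert hyK, hE2K, hSK] at hE
      linear_combination hE
    -- Conclusion
    rw [Finset.card_le_one]
    intro i hi j hj
    simp only [Finset.mem_filter] at hi hj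
    have hi' : i = x ∨ i = y := by
      by_contra h
      push_neg at h
      exact hi.2 (step2 i h.1 h.2)
    have hj' : j = x ∨ j = y := by
      by_contra h
      push_neg at h
      exact hj.2 (step2 j h.1 h.2)
    have hxz : a x = 0 ∨ a y = 0 := mul_eq_zero.1 step3
    rcases hi' with rfl | rfl <;> rcases hj' with rfl | rfl
    · rfl
    · rcases hxz with h | h
      · exact absurd h hi.2
      · exact absurd h hj.2
    · rcases hxz with h | h
      · exact absurd h hj.2
      · exact absurd h hi.2
    · rfl
end

section
/- Let n ≥ 3 be an integer and a ∈ ℂⁿ. For i ∈ {1,…,n} let K_i = {1,…,n} \ {i}. If e_2(a_{K_i}) = 0 for every i ∈ {1,…,n}, then e_2(a_1,…,a_n) = 0 and a has at most one nonzero entry. -/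
/-!
Removing `i` from the index set lowers `e₂(a)` by `aᵢ (S - aᵢ)`, where `S = ∑ aⱼ`; so the
hypothesis says `e₂(a) = aᵢ (S - aᵢ)` for every `i`. Summing over `i` gives
`n e₂(a) = S² - ∑ aᵢ² = 2 e₂(a)`, hence `e₂(a) = 0` as `n ≠ 2`. Then every nonzero `aᵢ`
equals `S`, and if `m` entries are nonzero, `S = m S` with `S ≠ 0` forces `m = 1`.
-/

open Finset

section ElementarySymmetric

variable {ι R : Type*}

theorem sum_powersetCard_one_prod [CommSemiring R] (f : ι → R) (s : Finset ι) :
    ∑ P ∈ powersetCard 1 s, ∏ j ∈ P, f j = ∑ j ∈ s, f j := by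
  simp [powersetCard_one]

theorem sum_powersetCard_succ_insert_prod [DecidableEq ι] [CommSemiring R] (f : ι → R)
    {s : Finset ι} {x : ι} (hx : x ∉ s) (k : ℕ) :
    ∑ P ∈ powersetCard (k + 1) (insert x s), ∏ j ∈ P, f j =
      ∑ P ∈ powersetCard (k + 1) s, ∏ j ∈ P, f j + f x * ∑ P ∈ powersetCard k s, ∏ j ∈ P, f j := by
  have hxP : ∀ P ∈ powersetCard k s, x ∉ P := fun P hP hxP =>
    hx ((mem_powersetCard.1 hP).1 hxP)
  have hdisj : Disjoint (powersetCard (k + 1) s) ((powersetCard k s).image (insert x)) := by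
    refine disjoint_left.2 fun P hP hP' => ?_
    obtain ⟨Q, -, rfl⟩ := mem_image.1 hP'
    exact hx ((mem_powersetCard.1 hP).1 (mem_insert_self x Q))
  have hinj : Set.InjOn (insert x) (powersetCard k s : Set (Finset ι)) := fun P hP Q hQ hPQ => by
    rw [← erase_insert (hxP P hP), ← erase_insert (hxP Q hQ), hPQ]
  rw [powersetCard_succ_insert hx, sum_union hdisj, sum_image hinj, mul_sum]
  exact congrArg _ (sum_congr rfl fun P hP => prod_insert (hxP P hP))

theorem sum_powersetCard_two_insert_prod [DecidableEq ι] [CommSemiring R] (f : ι → R)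
    {s : Finset ι} {x : ι} (hx : x ∉ s) :
    ∑ P ∈ powersetCard 2 (insert x s), ∏ j ∈ P, f j =
      ∑ P ∈ powersetCard 2 s, ∏ j ∈ P, f j + f x * ∑ j ∈ s, f j := by
  rw [sum_powersetCard_succ_insert_prod f hx 1, sum_powersetCard_one_prod]

theorem sum_powersetCard_two_prod_eq_erase [DecidableEq ι] [CommSemiring R] (f : ι → R)
    {s : Finset ι} {i : ι} (hi : i ∈ s) :
    ∑ P ∈ powersetCard 2 s, ∏ j ∈ P, f j =
      ∑ P ∈ powersetCard 2 (s.erase i), ∏ j ∈ P, f j + f i * ∑ j ∈ s.erase i, f j := by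
  conv_lhs => rw [← insert_erase hi]
  exact sum_powersetCard_two_insert_prod f (notMem_erase i s)

theorem two_mul_sum_powersetCard_two_prod_add_sum_sq [DecidableEq ι] [CommSemiring R] (f : ι → R)
    (s : Finset ι) :
    2 * ∑ P ∈ powersetCard 2 s, ∏ j ∈ P, f j + ∑ j ∈ s, f j ^ 2 = (∑ j ∈ s, f j) ^ 2 := by
  induction s using Finset.induction with
  | empty => simp [powersetCard_eq_empty.2 (show (∅ : Finset ι).card < 2 by simp)]
  | insert x s hx ih =>
    rw [sum_powersetCard_two_insert_prod f hx, sum_insert hx, sum_insert hx, add_sq, ← ih]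
    ring

end ElementarySymmetric

section DeletedIndex

variable {ι R : Type*} [Fintype ι] [CommRing R]

theorem sum_powersetCard_two_prod_univ_eq_mul_sum_sub [DecidableEq ι] (a : ι → R)
    (h : ∀ i, ∑ P ∈ powersetCard 2 (univ \ {i}), ∏ j ∈ P, a j = 0) (i : ι) :
    ∑ P ∈ powersetCard 2 univ, ∏ j ∈ P, a j = a i * (∑ j, a j - a i) := by
  have hsplit := sum_powersetCard_two_prod_eq_erase a (mem_univ i)
  rwa [← sdiff_singleton_eq_erase, h i, zero_add, sdiff_singleton_eq_erase,
    sum_erase_eq_sub (mem_univ i)] at hsplit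

variable [IsDomain R] [CharZero R]

theorem sum_powersetCard_two_prod_univ_eq_zero [DecidableEq ι] (hcard : Fintype.card ι ≠ 2)
    (a : ι → R) (h : ∀ i, ∑ P ∈ powersetCard 2 (univ \ {i}), ∏ j ∈ P, a j = 0) :
    ∑ P ∈ powersetCard 2 univ, ∏ j ∈ P, a j = 0 := by
  set E := ∑ P ∈ powersetCard 2 univ, ∏ j ∈ P, a j
  set S := ∑ j, a j
  have hsum : (Fintype.card ι : R) * E + ∑ j, a j ^ 2 = S ^ 2 := by
    calc (Fintype.card ι : R) * E + ∑ j, a j ^ 2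
        = ∑ i, a i * (S - a i) + ∑ j, a j ^ 2 := by
          rw [← card_univ, ← nsmul_eq_mul, ← sum_const]
          exact congrArg (· + _) (sum_congr rfl fun i _ =>
            sum_powersetCard_two_prod_univ_eq_mul_sum_sub a h i)
      _ = S ^ 2 := by
          rw [← sum_add_distrib, sq S, sum_mul]
          exact sum_congr rfl fun i _ => by ring
  have htwo := two_mul_sum_powersetCard_two_prod_add_sum_sq a univ
  have hne : (Fintype.card ι : R) - 2 ≠ 0 := by
    rw [sub_ne_zero]
    exact_mod_cast hcard
  have hmul : ((Fintype.card ι : R) - 2) * E = 0 := by linear_combination hsum - htwo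
  exact (mul_eq_zero.1 hmul).resolve_left hne

theorem card_filter_ne_zero_le_one_of_forall_mul_sum_sub_eq_zero [DecidableEq R] (a : ι → R)
    (h : ∀ i, a i * (∑ j, a j - a i) = 0) : #{i | a i ≠ 0} ≤ 1 := by
  set S := ∑ j, a j
  have heq : ∀ i, a i ≠ 0 → a i = S := fun i hi =>
    (sub_eq_zero.1 ((mul_eq_zero.1 (h i)).resolve_left hi)).symm
  by_contra! hT
  obtain ⟨i, hiT⟩ := card_pos.1 (zero_lt_one.trans hT)
  have hi : a i ≠ 0 := (mem_filter.1 hiT).2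
  have hS : S ≠ 0 := heq i hi ▸ hi
  have hST : S = #{i | a i ≠ 0} * S := by
    calc S = ∑ j ∈ {i | a i ≠ 0}, a j := (sum_filter_ne_zero univ).symm
      _ = ∑ _j ∈ {i | a i ≠ 0}, S := sum_congr rfl fun j hj => heq j (mem_filter.1 hj).2
      _ = #{i | a i ≠ 0} * S := by rw [sum_const, nsmul_eq_mul]
  have hT_one : (#{i | a i ≠ 0} : R) = 1 := (mul_eq_right₀ hS).1 hST.symm
  exact hT.ne' (by exact_mod_cast hT_one)

end DeletedIndex

/-- Let `n ≥ 3` and `a ∈ ℂⁿ`. For `i` let `K_i = {1,…,n} \ {i}`.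
If `e₂(a_{K_i}) = 0` for every `i`, then `e₂(a₁,…,aₙ) = 0` and `a` has at most one
nonzero entry. -/
theorem esymm_two_eq_zero_and_at_most_one_nonzero (n : ℕ) (hn : 3 ≤ n) (a : Fin n → ℂ)
    (h : ∀ i : Fin n, ∑ P ∈ Finset.powersetCard 2 (Finset.univ \ {i}), ∏ j ∈ P, a j = 0) :
    (∑ P ∈ Finset.powersetCard 2 (Finset.univ : Finset (Fin n)), ∏ j ∈ P, a j = 0) ∧
      (Finset.univ.filter fun i => a i ≠ 0).card ≤ 1 := by
  have hE : ∑ P ∈ powersetCard 2 univ, ∏ j ∈ P, a j = 0 :=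
    sum_powersetCard_two_prod_univ_eq_zero (by rw [Fintype.card_fin]; omega) a h
  refine ⟨hE, card_filter_ne_zero_le_one_of_forall_mul_sum_sub_eq_zero a fun i => ?_⟩
  exact (sum_powersetCard_two_prod_univ_eq_mul_sum_sub a h i).symm.trans hE
end

section
/- Let n ≥ 3 be an integer and a ∈ ℂⁿ with e_2(a_{K_i}) = 0 for every i, where K_i = {1,…,n} \ {i}. Set α = Σ_{i=1}^n a_i. Then a_i · α = a_i² for every i ∈ {1,…,n}; consequently every nonzero entry of a equals α. -/
/-!
With `S = ∑ aⱼ²`, the identity `(∑_{j ∈ K} aⱼ)² = ∑_{j ∈ K} aⱼ² + 2 e₂(a_K)` turns the hypothesis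
for `Kᵢ` into `(α - aᵢ)² = S - aᵢ²`, i.e. `2 (aᵢ² - aᵢ α) = S - α²`. Summing over `i` gives
`2 (S - α²) = n (S - α²)`, so `S = α²` as `n ≠ 2`, and then `aᵢ² = aᵢ α`.
-/

open Finset

namespace Multiset

variable {R : Type*} [CommSemiring R]

theorem esymm_cons_succ (a : R) (s : Multiset R) (k : ℕ) :
    (a ::ₘ s).esymm (k + 1) = s.esymm (k + 1) + a * s.esymm k := by
  simp [esymm, powersetCard_cons, map_map, sum_map_mul_left]

theorem esymm_one (s : Multiset R) : s.esymm 1 = s.sum := by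
  simp [esymm, powersetCard_one, map_map]

theorem sq_sum_eq_sum_sq_add_two_mul_esymm_two (s : Multiset R) :
    s.sum ^ 2 = (s.map (· ^ 2)).sum + 2 * s.esymm 2 := by
  induction s using Multiset.induction with
  | empty => simp [esymm, powersetCard_zero_right]
  | cons a s ih =>
    rw [sum_cons, map_cons, sum_cons, esymm_cons_succ, esymm_one, add_sq, ih]
    ring

end Multiset

theorem Finset.sq_sum_eq_sum_sq_add_two_mul_sum_powersetCard_two {ι R : Type*} [CommSemiring R]
    (s : Finset ι) (f : ι → R) :
    (∑ i ∈ s, f i) ^ 2 = ∑ i ∈ s, f i ^ 2 + 2 * ∑ t ∈ s.powersetCard 2, ∏ i ∈ t, f i := by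
  simpa [← Finset.esymm_map_val, Function.comp_def] using
    (s.val.map f).sq_sum_eq_sum_sq_add_two_mul_esymm_two

section

variable {ι K : Type*} [Fintype ι] [DecidableEq ι]

theorem two_mul_sq_sub_mul_sum_of_sum_powersetCard_two_eq_zero [CommRing K] (a : ι → K) (i : ι)
    (h : ∑ t ∈ powersetCard 2 (univ \ {i}), ∏ j ∈ t, a j = 0) :
    2 * (a i ^ 2 - a i * ∑ k, a k) = ∑ k, a k ^ 2 - (∑ k, a k) ^ 2 := by
  have hsq := sq_sum_eq_sum_sq_add_two_mul_sum_powersetCard_two (univ \ {i}) a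
  rw [h, sum_sdiff_eq_sub (subset_univ _), sum_sdiff_eq_sub (subset_univ _)] at hsq
  simp only [sum_singleton] at hsq
  linear_combination hsq

theorem mul_sum_eq_sq_of_sum_powersetCard_two_eq_zero [CommRing K] [IsDomain K] [CharZero K]
    (hcard : Fintype.card ι ≠ 2) (a : ι → K)
    (h : ∀ i, ∑ t ∈ powersetCard 2 (univ \ {i}), ∏ j ∈ t, a j = 0) (i : ι) :
    a i * ∑ k, a k = a i ^ 2 := by
  have hi := two_mul_sq_sub_mul_sum_of_sum_powersetCard_two_eq_zero a i (h i)
  have hsum : ((Fintype.card ι : K) - 2) * (∑ k, a k ^ 2 - (∑ k, a k) ^ 2) = 0 := by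
    have hterms := sum_congr rfl fun j (_ : j ∈ univ) =>
      two_mul_sq_sub_mul_sum_of_sum_powersetCard_two_eq_zero a j (h j)
    rw [← mul_sum, sum_sub_distrib, ← sum_mul, sum_const, card_univ, nsmul_eq_mul] at hterms
    linear_combination -hterms
  have hc : ∑ k, a k ^ 2 - (∑ k, a k) ^ 2 = 0 := by
    refine (mul_eq_zero.mp hsum).resolve_left (sub_ne_zero.mpr ?_)
    exact_mod_cast hcard
  rw [hc, mul_eq_zero] at hi
  linear_combination -hi.resolve_left two_ne_zero

end

/-- Let `n ≥ 3` and `a ∈ ℂⁿ` with `e₂(a_{K_i}) = 0` for every `i`, where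
`K_i = {1,…,n} \ {i}`. Set `α = Σᵢ aᵢ`. Then `aᵢ · α = aᵢ²` for every `i`; consequently
every nonzero entry of `a` equals `α`. -/
theorem mul_sum_eq_sq (n : ℕ) (hn : 3 ≤ n) (a : Fin n → ℂ)
    (h : ∀ i : Fin n, ∑ P ∈ Finset.powersetCard 2 (Finset.univ \ {i}), ∏ j ∈ P, a j = 0) :
    (∀ i : Fin n, a i * (∑ k, a k) = (a i) ^ 2) ∧
      (∀ i : Fin n, a i ≠ 0 → a i = ∑ k, a k) := by
  have key := mul_sum_eq_sq_of_sum_powersetCard_two_eq_zero (by rw [Fintype.card_fin]; omega) a h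
  exact ⟨key, fun i hi => (mul_left_cancel₀ hi ((key i).trans (sq (a i)))).symm⟩
end

section
/- Let n and r be integers with 2 < r < n. If g ∈ GL_n(ℂ) satisfies e_r(g·x) = e_r(x) for all x ∈ ℂⁿ, and a ∈ ℂⁿ has exactly one nonzero entry, then g·a has exactly one nonzero entry. -/
open Finset Polynomial

/-- If `aa` is supported at a single index `j`, then `t ↦ e_r(y + t·aa)` is affine. -/
lemma esymm_single_affine (n r : ℕ) (j : Fin n) (aa y : Fin n → ℂ)
    (haa : ∀ i, i ≠ j → aa i = 0) :
    ∃ A B : ℂ, ∀ t : ℂ, esymm n r (fun i => y i + t * aa i) = A + B * t := by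
  classical
  refine ⟨esymm n r y,
    aa j * ∑ I ∈ (Finset.powersetCard r (Finset.univ : Finset (Fin n))).filter (fun I => j ∈ I),
      ∏ i ∈ I.erase j, y i, fun t => ?_⟩
  unfold esymm
  rw [← Finset.sum_filter_add_sum_filter_not (Finset.powersetCard r Finset.univ)
      (fun I => j ∈ I) (fun I => ∏ i ∈ I, (y i + t * aa i)),
    ← Finset.sum_filter_add_sum_filter_not (Finset.powersetCard r Finset.univ)
      (fun I => j ∈ I) (fun I => ∏ i ∈ I, y i)]
  have herase : ∀ I ∈ (Finset.powersetCard r (Finset.univ : Finset (Fin n))).filter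
      (fun I => j ∈ I), ∀ i ∈ I.erase j, y i + t * aa i = y i := by
    intro I hI i hi
    rw [haa i (Finset.ne_of_mem_erase hi)]; ring
  have h1 : ∀ I ∈ (Finset.powersetCard r (Finset.univ : Finset (Fin n))).filter
      (fun I => j ∈ I),
      ∏ i ∈ I, (y i + t * aa i) = (y j + t * aa j) * ∏ i ∈ I.erase j, y i := by
    intro I hI
    rw [← Finset.mul_prod_erase I _ (Finset.mem_filter.mp hI).2]
    exact congrArg _ (Finset.prod_congr rfl (herase I hI))
  have h2 : ∀ I ∈ (Finset.powersetCard r (Finset.univ : Finset (Fin n))).filter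
      (fun I => j ∈ I), ∏ i ∈ I, y i = y j * ∏ i ∈ I.erase j, y i := by
    intro I hI
    rw [← Finset.mul_prod_erase I _ (Finset.mem_filter.mp hI).2]
  have h3 : ∀ I ∈ (Finset.powersetCard r (Finset.univ : Finset (Fin n))).filter
      (fun I => ¬ j ∈ I), ∏ i ∈ I, (y i + t * aa i) = ∏ i ∈ I, y i := by
    intro I hI
    refine Finset.prod_congr rfl fun i hi => ?_
    have hij : i ≠ j := fun h => (Finset.mem_filter.mp hI).2 (h ▸ hi)
    rw [haa i hij]; ring
  rw [Finset.sum_congr rfl h1, Finset.sum_congr rfl h2, Finset.sum_congr rfl h3]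
  simp only [add_mul]
  rw [Finset.sum_add_distrib]
  have h4 : ∑ I ∈ (Finset.powersetCard r (Finset.univ : Finset (Fin n))).filter
      (fun I => j ∈ I), t * aa j * ∏ i ∈ I.erase j, y i
      = aa j * (∑ I ∈ (Finset.powersetCard r (Finset.univ : Finset (Fin n))).filter
      (fun I => j ∈ I), ∏ i ∈ I.erase j, y i) * t := by
    rw [Finset.mul_sum, Finset.sum_mul]
    exact Finset.sum_congr rfl fun I _ => by ring
  rw [h4]
  ring

/-- If `t ↦ e_r(z + t·b)` is affine, the "t² coefficient" vanishes. -/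
lemma coeff_two_zero (n r : ℕ) (z b : Fin n → ℂ) (A B : ℂ)
    (h : ∀ t : ℂ, esymm n r (fun i => z i + t * b i) = A + B * t) :
    ∑ I ∈ Finset.powersetCard r (Finset.univ : Finset (Fin n)), ∑ T ∈ I.powerset,
      (if (I \ T).card = 2 then (∏ i ∈ T, z i) * ∏ i ∈ I \ T, b i else 0) = 0 := by
  classical
  set P : Polynomial ℂ := ∑ I ∈ Finset.powersetCard r (Finset.univ : Finset (Fin n)),
    ∏ i ∈ I, (Polynomial.C (z i) + Polynomial.C (b i) * Polynomial.X) with hPdef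
  have hPeval : ∀ t : ℂ, P.eval t = A + B * t := by
    intro t
    rw [← h t]
    unfold esymm
    rw [hPdef, Polynomial.eval_finset_sum]
    refine Finset.sum_congr rfl fun I _ => ?_
    rw [Polynomial.eval_prod]
    exact Finset.prod_congr rfl fun i _ => by
      rw [Polynomial.eval_add, Polynomial.eval_mul, Polynomial.eval_C, Polynomial.eval_C,
        Polynomial.eval_X]
      ring
  have hP : P = Polynomial.C A + Polynomial.C B * Polynomial.X := by
    apply Polynomial.funext
    intro t
    simp [hPeval t]
  have h2 : P.coeff 2 = 0 := by
    rw [hP]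
    simp [Polynomial.coeff_C]
  rw [hPdef, Polynomial.finset_sum_coeff] at h2
  refine Eq.trans ?_ h2
  refine Finset.sum_congr rfl fun I _ => ?_
  rw [Finset.prod_add, Polynomial.finset_sum_coeff]
  refine Finset.sum_congr rfl fun T _ => ?_
  have hterm : (∏ i ∈ T, Polynomial.C (z i)) * ∏ i ∈ I \ T, (Polynomial.C (b i) * Polynomial.X)
      = Polynomial.C ((∏ i ∈ T, z i) * ∏ i ∈ I \ T, b i) * Polynomial.X ^ (I \ T).card := by
    rw [Finset.prod_mul_distrib, Finset.prod_const, map_mul, map_prod, map_prod]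
    ring
  rw [hterm, Polynomial.coeff_C_mul, Polynomial.coeff_X_pow]
  by_cases hc : (I \ T).card = 2
  · rw [if_pos hc, hc, if_pos rfl, mul_one]
  · rw [if_neg hc, if_neg (fun h => hc h.symm), mul_zero]

/-- Evaluating the t² coefficient at the indicator vector of `S` gives the sum of `b`-products
over pairs disjoint from `S`. -/
lemma bigsum_eq (n r : ℕ) (hr2 : 2 ≤ r) (b : Fin n → ℂ) (S : Finset (Fin n))
    (hS : S.card = r - 2) :
    ∑ I ∈ Finset.powersetCard r (Finset.univ : Finset (Fin n)), ∑ T ∈ I.powerset,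
      (if (I \ T).card = 2 then
        (∏ i ∈ T, (if i ∈ S then (1:ℂ) else 0)) * ∏ i ∈ I \ T, b i else 0)
    = ∑ T ∈ Finset.powersetCard 2 (Finset.univ \ S), ∏ i ∈ T, b i := by
  classical
  have inner : ∀ I ∈ Finset.powersetCard r (Finset.univ : Finset (Fin n)),
      (∑ T ∈ I.powerset, (if (I \ T).card = 2 then
        (∏ i ∈ T, (if i ∈ S then (1:ℂ) else 0)) * ∏ i ∈ I \ T, b i else 0))
      = if S ⊆ I then ∏ i ∈ I \ S, b i else 0 := by
    intro I hI
    have hIcard : I.card = r := (Finset.mem_powersetCard.mp hI).2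
    have hzero : ∀ T ∈ I.powerset, T ≠ S → (if (I \ T).card = 2 then
        (∏ i ∈ T, (if i ∈ S then (1:ℂ) else 0)) * ∏ i ∈ I \ T, b i else 0) = 0 := by
      intro T hT hTS
      by_cases hc : (I \ T).card = 2
      · rw [if_pos hc]
        have hTI : T ⊆ I := Finset.mem_powerset.mp hT
        have h1 := Finset.card_sdiff_of_subset hTI
        have h2 := Finset.card_le_card hTI
        have hTcard : T.card = r - 2 := by omega
        have hnsub : ¬ T ⊆ S := fun hsub =>
          hTS (Finset.eq_of_subset_of_card_le hsub (by omega))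
        obtain ⟨i, hiT, hiS⟩ := Finset.not_subset.mp hnsub
        have hiz : (if i ∈ S then (1:ℂ) else 0) = 0 := if_neg hiS
        rw [Finset.prod_eq_zero hiT hiz, zero_mul]
      · exact if_neg hc
    by_cases hSI : S ⊆ I
    · rw [if_pos hSI,
        Finset.sum_eq_single_of_mem S (Finset.mem_powerset.mpr hSI) hzero]
      have hc : (I \ S).card = 2 := by
        rw [Finset.card_sdiff_of_subset hSI]; omega
      rw [if_pos hc, Finset.prod_congr rfl (fun i hi => if_pos hi), Finset.prod_const_one,
        one_mul]
    · rw [if_neg hSI]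
      refine Finset.sum_eq_zero fun T hT => ?_
      refine hzero T hT fun hTS => hSI ?_
      exact hTS ▸ Finset.mem_powerset.mp hT
  rw [Finset.sum_congr rfl inner, ← Finset.sum_filter]
  refine Finset.sum_nbij' (fun I => I \ S) (fun U => S ∪ U) ?_ ?_ ?_ ?_ ?_
  · intro I hI
    rw [Finset.mem_filter, Finset.mem_powersetCard] at hI
    rw [Finset.mem_powersetCard]
    refine ⟨Finset.sdiff_subset_sdiff (Finset.subset_univ I) (le_refl S), ?_⟩
    rw [Finset.card_sdiff_of_subset hI.2, hI.1.2, hS]; omega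
  · intro U hU
    rw [Finset.mem_powersetCard, Finset.subset_sdiff] at hU
    rw [Finset.mem_filter, Finset.mem_powersetCard]
    refine ⟨⟨Finset.subset_univ _, ?_⟩, Finset.subset_union_left⟩
    rw [Finset.card_union_of_disjoint hU.1.2.symm, hS, hU.2]; omega
  · intro I hI
    rw [Finset.mem_filter] at hI
    exact Finset.union_sdiff_of_subset hI.2
  · intro U hU
    rw [Finset.mem_powersetCard, Finset.subset_sdiff] at hU
    exact Finset.union_sdiff_cancel_left hU.1.2.symm
  · intro I hI; rfl

/-- Twice the sum over pairs equals square of sum minus sum of squares. -/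
lemma two_mul_pairsum (n : ℕ) (b : Fin n → ℂ) (A : Finset (Fin n)) :
    2 * ∑ T ∈ Finset.powersetCard 2 A, ∏ i ∈ T, b i
      = (∑ i ∈ A, b i) ^ 2 - ∑ i ∈ A, (b i) ^ 2 := by
  classical
  induction A using Finset.induction_on with
  | empty =>
    rw [Finset.powersetCard_eq_empty.mpr (by simp)]
    simp
  | @insert x A hx ih =>
    have hdec := Finset.powersetCard_succ_insert hx 1
    rw [show (2 : ℕ) = Nat.succ 1 from rfl] at *
    rw [hdec]
    have hdisj : Disjoint (Finset.powersetCard (Nat.succ 1) A)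
        ((Finset.powersetCard 1 A).image (insert x)) := by
      rw [Finset.disjoint_left]
      intro T hT hT'
      obtain ⟨U, hU, rfl⟩ := Finset.mem_image.mp hT'
      have : insert x U ⊆ A := (Finset.mem_powersetCard.mp hT).1
      exact hx (this (Finset.mem_insert_self x U))
    rw [Finset.sum_union hdisj]
    have hinj : ∀ U ∈ Finset.powersetCard 1 A, ∀ V ∈ Finset.powersetCard 1 A,
        insert x U = insert x V → U = V := by
      intro U hU V hV hUV
      have hxU : x ∉ U := fun h => hx ((Finset.mem_powersetCard.mp hU).1 h)
      have hxV : x ∉ V := fun h => hx ((Finset.mem_powersetCard.mp hV).1 h)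
      rw [← Finset.erase_insert hxU, ← Finset.erase_insert hxV, hUV]
    rw [Finset.sum_image hinj]
    have himg : ∑ U ∈ Finset.powersetCard 1 A, ∏ i ∈ insert x U, b i
        = b x * ∑ i ∈ A, b i := by
      rw [Finset.mul_sum]
      have step1 : ∑ U ∈ Finset.powersetCard 1 A, ∏ i ∈ insert x U, b i
          = ∑ U ∈ Finset.powersetCard 1 A, b x * ∏ i ∈ U, b i :=
        Finset.sum_congr rfl fun U hU =>
          Finset.prod_insert fun h => hx ((Finset.mem_powersetCard.mp hU).1 h)
      rw [step1, Finset.powersetCard_one, Finset.sum_map]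
      simp
    rw [himg, Finset.sum_insert hx, Finset.sum_insert hx]
    linear_combination ih

/-- Let `2 < r < n`. If `g ∈ GLₙ(ℂ)` satisfies `e_r(g·x) = e_r(x)` for all
`x ∈ ℂⁿ` and `a ∈ ℂⁿ` has exactly one nonzero entry, then `g·a` has exactly one nonzero
entry. -/
theorem rank_one_preserved (n r : ℕ) (hr : 2 < r) (hrn : r < n)
    (g : Matrix (Fin n) (Fin n) ℂ) (hg : IsUnit g)
    (hstab : ∀ x : Fin n → ℂ, esymm n r (g.mulVec x) = esymm n r x)
    (a : Fin n → ℂ) (ha : (Finset.univ.filter fun i => a i ≠ 0).card = 1) :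
    (Finset.univ.filter fun i => g.mulVec a i ≠ 0).card = 1 := by
  classical
  obtain ⟨j, hj⟩ := Finset.card_eq_one.mp ha
  have haj : a j ≠ 0 := by
    have : j ∈ Finset.univ.filter fun i => a i ≠ 0 := hj ▸ Finset.mem_singleton_self j
    exact (Finset.mem_filter.mp this).2
  have ha0 : ∀ i, i ≠ j → a i = 0 := by
    intro i hij
    by_contra h
    have : i ∈ Finset.univ.filter fun i => a i ≠ 0 :=
      Finset.mem_filter.mpr ⟨Finset.mem_univ i, h⟩
    rw [hj, Finset.mem_singleton] at this
    exact hij this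
  obtain ⟨u, hu⟩ := hg
  set b := g.mulVec a with hbdef
  set g' : Matrix (Fin n) (Fin n) ℂ := ↑u⁻¹ with hg'def
  have hgg' : g * g' = 1 := by rw [← hu, hg'def]; exact_mod_cast u.mul_inv
  have hg'g : g' * g = 1 := by rw [← hu, hg'def]; exact_mod_cast u.inv_mul
  -- pair sums over complements of (r-2)-sets vanish
  have key : ∀ S : Finset (Fin n), S.card = r - 2 →
      ∑ T ∈ Finset.powersetCard 2 (Finset.univ \ S), ∏ i ∈ T, b i = 0 := by
    intro S hS
    have hgy : g.mulVec (g'.mulVec (fun i => if i ∈ S then (1:ℂ) else 0))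
        = (fun i => if i ∈ S then (1:ℂ) else 0) := by
      rw [Matrix.mulVec_mulVec, hgg', Matrix.one_mulVec]
    obtain ⟨A, B, hAB⟩ := esymm_single_affine n r j a
      (g'.mulVec (fun i => if i ∈ S then (1:ℂ) else 0)) ha0
    have haffine : ∀ t : ℂ,
        esymm n r (fun i => (if i ∈ S then (1:ℂ) else 0) + t * b i) = A + B * t := by
      intro t
      have hfun : (fun i => (if i ∈ S then (1:ℂ) else 0) + t * b i)
          = g.mulVec (fun i =>
              g'.mulVec (fun i => if i ∈ S then (1:ℂ) else 0) i + t * a i) := by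
        have hsplit : (fun i =>
              g'.mulVec (fun i => if i ∈ S then (1:ℂ) else 0) i + t * a i)
            = g'.mulVec (fun i => if i ∈ S then (1:ℂ) else 0) + t • a := by
          funext k
          simp [smul_eq_mul]
        rw [hsplit, Matrix.mulVec_add, Matrix.mulVec_smul, hgy]
        funext i
        simp [hbdef, smul_eq_mul]
      rw [hfun, hstab, hAB]
    have h0 := coeff_two_zero n r (fun i => if i ∈ S then (1:ℂ) else 0) b A B haffine
    rw [bigsum_eq n r (by omega) b S hS] at h0
    exact h0
  -- f(A) = 0 for |A| = n - r + 2
  have Hm : ∀ A : Finset (Fin n), A.card = n - r + 2 →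
      (∑ i ∈ A, b i) ^ 2 - ∑ i ∈ A, (b i) ^ 2 = 0 := by
    intro A hA
    have hSc : (Finset.univ \ A).card = r - 2 := by
      rw [Finset.card_sdiff_of_subset (Finset.subset_univ A), Finset.card_univ, Fintype.card_fin]
      omega
    have h0 := key _ hSc
    rw [Finset.sdiff_sdiff_self_left, Finset.univ_inter] at h0
    have h1 := two_mul_pairsum n b A
    rw [h0, mul_zero] at h1
    exact h1.symm
  -- f(C) = 0 for |C| = n - r + 3
  have Hm1 : ∀ C : Finset (Fin n), C.card = n - r + 3 →
      (∑ i ∈ C, b i) ^ 2 - ∑ i ∈ C, (b i) ^ 2 = 0 := by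
    intro C hC
    have herase : ∀ x ∈ C,
        ((∑ i ∈ C, b i) - b x) ^ 2 - ((∑ i ∈ C, (b i) ^ 2) - (b x) ^ 2) = 0 := by
      intro x hx
      have hcard : (C.erase x).card = n - r + 2 := by
        rw [Finset.card_erase_of_mem hx]; omega
      have h2 := Hm _ hcard
      rw [Finset.sum_erase_eq_sub hx, Finset.sum_erase_eq_sub hx] at h2
      exact h2
    have hsum : ∑ x ∈ C, (((∑ i ∈ C, b i) - b x) ^ 2
        - ((∑ i ∈ C, (b i) ^ 2) - (b x) ^ 2)) = 0 := Finset.sum_eq_zero herase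
    have hexp : ∑ x ∈ C, (((∑ i ∈ C, b i) - b x) ^ 2
        - ((∑ i ∈ C, (b i) ^ 2) - (b x) ^ 2))
        = (C.card : ℂ) * ((∑ i ∈ C, b i) ^ 2 - ∑ i ∈ C, (b i) ^ 2)
          - 2 * ((∑ i ∈ C, b i) ^ 2 - ∑ i ∈ C, (b i) ^ 2) := by
      have hterm : ∀ x ∈ C, ((∑ i ∈ C, b i) - b x) ^ 2
          - ((∑ i ∈ C, (b i) ^ 2) - (b x) ^ 2)
          = ((∑ i ∈ C, b i) ^ 2 - ∑ i ∈ C, (b i) ^ 2)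
            + (2 * (b x) ^ 2 - (2 * (∑ i ∈ C, b i)) * b x) := fun x _ => by ring
      rw [Finset.sum_congr rfl hterm, Finset.sum_add_distrib, Finset.sum_const,
        nsmul_eq_mul, Finset.sum_sub_distrib, ← Finset.mul_sum, ← Finset.mul_sum]
      ring
    rw [hexp] at hsum
    have hfac : ((C.card : ℂ) - 2) * ((∑ i ∈ C, b i) ^ 2 - ∑ i ∈ C, (b i) ^ 2) = 0 := by
      linear_combination hsum
    rcases mul_eq_zero.mp hfac with h | h
    · exfalso
      have hC2 : ((C.card : ℕ) : ℂ) = ((2 : ℕ) : ℂ) := by push_cast; linear_combination h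
      have : C.card = 2 := Nat.cast_injective hC2
      omega
    · exact h
  -- each entry is 0 or the total sum
  have Hx : ∀ C : Finset (Fin n), C.card = n - r + 3 → ∀ x ∈ C,
      b x * ((∑ i ∈ C, b i) - b x) = 0 := by
    intro C hC x hx
    have h1 := Hm1 C hC
    have hcard : (C.erase x).card = n - r + 2 := by
      rw [Finset.card_erase_of_mem hx]; omega
    have h2 := Hm _ hcard
    rw [Finset.sum_erase_eq_sub hx, Finset.sum_erase_eq_sub hx] at h2
    linear_combination (h1 - h2) / 2
  -- at most one nonzero entry
  have huniq : ∀ p q : Fin n, p ≠ q → b p ≠ 0 → b q ≠ 0 → False := by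
    intro p q hpq hbp hbq
    have hpair : ({p, q} : Finset (Fin n)).card = 2 := Finset.card_pair hpq
    obtain ⟨C, hsub, hcard⟩ := Finset.exists_superset_card_eq
      (s := ({p, q} : Finset (Fin n))) (n := n - r + 3)
      (by rw [hpair]; omega) (by rw [Fintype.card_fin]; omega)
    have hvals : ∀ x ∈ C, b x ≠ 0 → b x = ∑ i ∈ C, b i := by
      intro x hx hbx
      rcases mul_eq_zero.mp (Hx C hcard x hx) with h | h
      · exact absurd h hbx
      · exact (sub_eq_zero.mp (by linear_combination h)).symm
    have hpC : p ∈ C := hsub (by simp)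
    have hqC : q ∈ C := hsub (by simp)
    have hσ : (∑ i ∈ C, b i) ≠ 0 := (hvals p hpC hbp) ▸ hbp
    have hfilt : ∑ x ∈ C.filter (fun x => b x ≠ 0), b x = ∑ i ∈ C, b i :=
      Finset.sum_filter_ne_zero C
    have hall : ∀ x ∈ C.filter (fun x => b x ≠ 0), b x = ∑ i ∈ C, b i := by
      intro x hx'
      obtain ⟨hxC, hbx⟩ := Finset.mem_filter.mp hx'
      exact hvals x hxC hbx
    rw [Finset.sum_congr rfl hall, Finset.sum_const, nsmul_eq_mul] at hfilt
    have hk2 : 2 ≤ (C.filter (fun x => b x ≠ 0)).card := by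
      have hss : ({p, q} : Finset (Fin n)) ⊆ C.filter (fun x => b x ≠ 0) := by
        intro i hi
        rcases Finset.mem_insert.mp hi with rfl | hi'
        · exact Finset.mem_filter.mpr ⟨hpC, hbp⟩
        · rw [Finset.mem_singleton] at hi'
          subst hi'
          exact Finset.mem_filter.mpr ⟨hqC, hbq⟩
      calc 2 = ({p, q} : Finset (Fin n)).card := hpair.symm
        _ ≤ _ := Finset.card_le_card hss
    have hone : (((C.filter (fun x => b x ≠ 0)).card : ℂ) - 1) * (∑ i ∈ C, b i) = 0 := by
      linear_combination hfilt
    rcases mul_eq_zero.mp hone with h | h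
    · have h1 : (((C.filter (fun x => b x ≠ 0)).card : ℕ) : ℂ) = ((1 : ℕ) : ℂ) := by
        push_cast; linear_combination h
      have := Nat.cast_injective h1
      omega
    · exact hσ h
  -- b is nonzero
  have hbne : ∃ p, b p ≠ 0 := by
    by_contra h
    push_neg at h
    have hb0 : b = 0 := funext fun i => h i
    have haz : a = 0 := by
      have hinv : g'.mulVec (g.mulVec a) = a := by
        rw [Matrix.mulVec_mulVec, hg'g, Matrix.one_mulVec]
      rw [← hinv, ← hbdef, hb0, Matrix.mulVec_zero]
    exact haj (by rw [haz]; rfl)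
  obtain ⟨p, hp⟩ := hbne
  have hset : Finset.univ.filter (fun i => g.mulVec a i ≠ 0) = {p} := by
    ext i
    simp only [Finset.mem_filter, Finset.mem_univ, true_and, Finset.mem_singleton]
    constructor
    · intro hi
      by_contra hne
      exact huniq i p hne hi hp
    · intro h; subst h; exact hp
  rw [hset, Finset.card_singleton]
end

section
/- Let n ≥ 2 and r ≥ 1 be integers, and for 1 ≤ i ≤ n−1 set ℓ_i = r·n(n+1)/2 − i. Consider the n vectors in ℤⁿ: v_0 = (r, 0, …, 0) and, for 1 ≤ i ≤ n−1, v_i = (ℓ_i, 1, …, 1, 0, …, 0) with exactly i entries equal to 1 following the first coordinate. Then the ℤ-submodule of ℤⁿ generated by v_0, v_1, …, v_{n−1} equals { λ ∈ ℤⁿ : λ_1 + λ_2 + … + λ_n is divisible by r }. -/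
open Finset

/-- The coordinate-sum linear map on `ℤⁿ`. -/
def sumLM (n : ℕ) : (Fin n → ℤ) →ₗ[ℤ] ℤ where
  toFun x := ∑ j, x j
  map_add' x y := by simp [Finset.sum_add_distrib]
  map_smul' c x := by simp [Finset.mul_sum]

/-- Let `n ≥ 2`, `r ≥ 1` and `ℓᵢ = r·n(n+1)/2 - i`. Consider the vectors
`v₀ = (r, 0, …, 0)` and, for `1 ≤ i ≤ n-1`, `vᵢ = (ℓᵢ, 1, …, 1, 0, …, 0)` with exactly `i`
entries equal to `1` after the first coordinate. Then the `ℤ`-submodule of `ℤⁿ` generated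
by `v₀, v₁, …, v_{n-1}` equals `{λ ∈ ℤⁿ : r ∣ λ₁ + ⋯ + λₙ}`. -/
theorem span_eq_divisible_sum (n r : ℕ) (hn : 2 ≤ n) (hr : 1 ≤ r) :
    ∀ lam : Fin n → ℤ,
      lam ∈ Submodule.span ℤ
        ({fun j : Fin n => if (j : ℕ) = 0 then (r : ℤ) else 0} ∪
          {v : Fin n → ℤ | ∃ i : ℕ, 1 ≤ i ∧ i ≤ n - 1 ∧
            v = fun j : Fin n =>
              if (j : ℕ) = 0 then (r : ℤ) * (n * (n + 1) / 2 : ℕ) - i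
              else if (j : ℕ) ≤ i then 1 else 0}) ↔
      (r : ℤ) ∣ ∑ j, lam j := by
  haveI : NeZero n := ⟨by omega⟩
  have hval0 : ∀ j : Fin n, (j : ℕ) = 0 ↔ j = 0 := by
    intro j; exact ⟨fun h => Fin.ext h, fun h => by simp [h]⟩
  set T : ℕ := n * (n + 1) / 2 with hT
  set v0 : Fin n → ℤ := fun j : Fin n => if (j : ℕ) = 0 then (r : ℤ) else 0 with hv0
  set S : Set (Fin n → ℤ) :=
    ({v0} ∪
      {v : Fin n → ℤ | ∃ i : ℕ, 1 ≤ i ∧ i ≤ n - 1 ∧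
        v = fun j : Fin n =>
          if (j : ℕ) = 0 then (r : ℤ) * T - i
          else if (j : ℕ) ≤ i then 1 else 0}) with hS
  set w : ℕ → Fin n → ℤ := fun i j =>
    if (j : ℕ) = 0 then (r : ℤ) * T - i else if (j : ℕ) ≤ i then 1 else 0 with hw
  intro lam
  constructor
  · -- forward: everything in the span has r ∣ sum
    intro h
    have hle : Submodule.span ℤ S ≤ Submodule.comap (sumLM n) (Ideal.span {(r : ℤ)}) := by
      rw [Submodule.span_le]
      rintro v (hv | ⟨i, hi1, hi2, rfl⟩)
      · rw [Set.mem_singleton_iff] at hv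
        subst hv
        simp only [SetLike.mem_coe, Submodule.mem_comap, sumLM, LinearMap.coe_mk,
          AddHom.coe_mk, Ideal.mem_span_singleton, hv0]
        have : ∑ j : Fin n, (if (j : ℕ) = 0 then (r : ℤ) else 0) = r := by
          simp only [hval0]
          simp
        rw [this]
      · simp only [SetLike.mem_coe, Submodule.mem_comap, sumLM, LinearMap.coe_mk,
          AddHom.coe_mk, Ideal.mem_span_singleton]
        have hsum : ∑ j : Fin n,
            (if (j : ℕ) = 0 then (r : ℤ) * T - i else if (j : ℕ) ≤ i then 1 else 0)
            = (r : ℤ) * T := by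
          rw [Fin.sum_univ_eq_sum_range (fun j => if j = 0 then (r : ℤ) * T - i else if j ≤ i then 1 else 0) n]
          have h0 : 0 ∈ range n := by simp; omega
          rw [← Finset.add_sum_erase _ _ h0]
          have hcongr : ∀ j ∈ (range n).erase 0,
              (if j = 0 then (r : ℤ) * T - i else if j ≤ i then 1 else 0)
              = if j ∈ Finset.Icc 1 i then 1 else 0 := by
            intro j hj
            simp only [Finset.mem_erase, Finset.mem_range] at hj
            simp only [Finset.mem_Icc]
            split_ifs <;> omega
          rw [Finset.sum_congr rfl hcongr, Finset.sum_ite_mem]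
          have hint : (range n).erase 0 ∩ Finset.Icc 1 i = Finset.Icc 1 i := by
            apply Finset.inter_eq_right.mpr
            intro j hj
            simp only [Finset.mem_Icc] at hj
            simp only [Finset.mem_erase, Finset.mem_range]
            omega
          rw [hint, Finset.sum_const, Nat.card_Icc]
          have : i + 1 - 1 = i := by omega
          rw [this]
          push_cast
          ring
        rw [hsum]
        exact ⟨T, rfl⟩
    have := hle h
    simpa only [Submodule.mem_comap, sumLM, LinearMap.coe_mk, AddHom.coe_mk,
      Ideal.mem_span_singleton] using this
  · -- reverse
    intro h
    obtain ⟨k, hk⟩ := h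
    have hv0mem : v0 ∈ Submodule.span ℤ S :=
      Submodule.subset_span (Or.inl rfl)
    have hwmem : ∀ i : ℕ, i ≤ n - 1 → w i ∈ Submodule.span ℤ S := by
      intro i hi
      rcases Nat.eq_zero_or_pos i with hi0 | hi1
      · subst hi0
        have : w 0 = (T : ℤ) • v0 := by
          funext j
          simp only [hw, hv0, Pi.smul_apply, smul_eq_mul]
          split_ifs with h1 h2
          · push_cast; ring
          · omega
          · ring
        rw [this]
        exact Submodule.smul_mem _ _ hv0mem
      · exact Submodule.subset_span (Or.inr ⟨i, hi1, hi, rfl⟩)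
    have hd : ∀ t : Fin n, t ≠ 0 →
        (fun j : Fin n => if (j : ℕ) = 0 then (1 : ℤ) else if j = t then -1 else 0)
          ∈ Submodule.span ℤ S := by
      intro t ht
      have ht1 : 1 ≤ (t : ℕ) := by
        rcases Nat.eq_zero_or_pos (t : ℕ) with h0 | h0
        · exact absurd ((hval0 t).mp h0) ht
        · exact h0
      have ht2 : (t : ℕ) ≤ n - 1 := by have := t.isLt; omega
      have heq : (fun j : Fin n => if (j : ℕ) = 0 then (1 : ℤ) else if j = t then -1 else 0)
          = w ((t : ℕ) - 1) - w (t : ℕ) := by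
        funext j
        simp only [hw, Pi.sub_apply]
        by_cases hj : (j : ℕ) = 0
        · rw [if_pos hj, if_pos hj, if_pos hj, Nat.cast_sub ht1]
          push_cast
          ring
        · rw [if_neg hj, if_neg hj, if_neg hj]
          by_cases hjt : j = t
          · subst hjt
            rw [if_pos rfl, if_neg (by omega), if_pos (le_refl _)]
            norm_num
          · rw [if_neg hjt]
            have hne : (j : ℕ) ≠ (t : ℕ) := fun hc => hjt (Fin.ext hc)
            split_ifs <;> omega
      rw [heq]
      exact Submodule.sub_mem _ (hwmem _ (by omega)) (hwmem _ ht2)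
    have hlam : lam = k • v0 + ∑ t ∈ Finset.univ.erase (0 : Fin n),
        (-lam t) • (fun j : Fin n => if (j : ℕ) = 0 then (1 : ℤ) else if j = t then -1 else 0) := by
      funext j
      rw [Pi.add_apply, Pi.smul_apply, Finset.sum_apply]
      simp only [Pi.smul_apply, smul_eq_mul]
      by_cases hj : (j : ℕ) = 0
      · have hj0 : j = 0 := (hval0 j).mp hj
        have hterm : ∀ t ∈ Finset.univ.erase (0 : Fin n),
            -lam t * (if (j : ℕ) = 0 then (1 : ℤ) else if j = t then -1 else 0) = -lam t := by
          intro t _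
          rw [if_pos hj, mul_one]
        rw [Finset.sum_congr rfl hterm, Finset.sum_neg_distrib,
          Finset.sum_erase_eq_sub (Finset.mem_univ (0 : Fin n)), hk]
        simp only [hv0]
        rw [if_pos hj, hj0]
        ring
      · have hjne : j ≠ 0 := fun hc => hj (by simp [hc])
        have hterm : ∀ t ∈ Finset.univ.erase (0 : Fin n),
            -lam t * (if (j : ℕ) = 0 then (1 : ℤ) else if j = t then -1 else 0)
            = if t = j then lam t else 0 := by
          intro t _
          rw [if_neg hj]
          by_cases h : t = j
          · subst h
            rw [if_pos rfl, if_pos rfl]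
            ring
          · rw [if_neg h, if_neg (fun hc => h hc.symm), mul_zero]
        rw [Finset.sum_congr rfl hterm, Finset.sum_ite_eq',
          if_pos (Finset.mem_erase.mpr ⟨hjne, Finset.mem_univ j⟩)]
        simp only [hv0]
        rw [if_neg hj]
        ring
    rw [hlam]
    exact Submodule.add_mem _ (Submodule.smul_mem _ _ hv0mem)
      (Submodule.sum_mem _ fun t ht =>
        Submodule.smul_mem _ _ (hd t (Finset.ne_of_mem_erase ht)))
end
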